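/- arXiv:2007.01781 — 4 statements merged into one kernel-verified Lean document; each statement's English description precedes it below -/
import Mathlib

section
/- The Möbius transformations A(z) = i(1−z)/(z+1) and B(z) = −z generate a subgroup of PSL_2(ℂ) isomorphic to the alternating group A_4. -/
/-!
`PSL₂(ℂ)` acts faithfully on `ℙ¹(ℂ)`; indeed an element fixing `∞`, `0` and `1` is trivial.
The points `0, ∞, ±1, ±i` are the vertices of an octahedron, and `A`, `B` permute one of its two
classes of four pairwise non-adjacent faces: `A` as a 3-cycle, `B` as a double transposition.
Any two of these faces meet in a single vertex, and the vertices `∞, 0, 1` arise this way, so an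
element fixing every face is trivial. Hence `⟨A, B⟩` embeds into `S₄` with image the subgroup
generated by a 3-cycle and a double transposition, which is `A₄`.
-/

open Complex Equiv Matrix MulAction Projectivization Subgroup
open scoped LinearAlgebra.Projectivization MatrixGroups Pointwise

namespace Projectivization

variable {K : Type*} [Field K]

theorem mk_eq_mk_iff_mul_eq_mul (v w : Fin 2 → K) (hv : v ≠ 0) (hw : w ≠ 0) :
    mk K v hv = mk K w hw ↔ v 0 * w 1 = v 1 * w 0 := by
  rw [mk_eq_mk_iff']
  constructor
  · rintro ⟨a, rfl⟩
    simp only [Pi.smul_apply, smul_eq_mul]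
    ring
  · intro h
    by_cases hw0 : w 0 = 0
    · have hw1 : w 1 ≠ 0 := fun hw1 => hw (funext fun i => by fin_cases i <;> simp [hw0, hw1])
      refine ⟨v 1 / w 1, funext fun i => ?_⟩
      fin_cases i
      · simpa [hw0, hw1, eq_comm] using h
      · simp [hw1]
    · refine ⟨v 0 / w 0, funext fun i => ?_⟩
      fin_cases i
      · simp [hw0]
      · simp only [Fin.mk_one, Pi.smul_apply, smul_eq_mul]
        field_simp
        linear_combination h

def ofAffine (z : K) : ℙ K (Fin 2 → K) := mk K ![z, 1] (by simp)

def infinity : ℙ K (Fin 2 → K) := mk K ![1, 0] (by simp)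

theorem ofAffine_injective : Function.Injective (ofAffine (K := K)) := by
  intro z w h
  simpa [ofAffine, mk_eq_mk_iff_mul_eq_mul] using h

theorem ofAffine_ne_infinity (z : K) : ofAffine z ≠ infinity := by
  simp [ofAffine, infinity, mk_eq_mk_iff_mul_eq_mul]

theorem infinity_ne_ofAffine (z : K) : infinity ≠ ofAffine z := (ofAffine_ne_infinity z).symm

end Projectivization

namespace Matrix.ProjectiveSpecialLinearGroup

variable {K : Type*} [Field K]

theorem coe_smul_mk (g : SL(2, K)) (v : Fin 2 → K) (hv : v ≠ 0) :
    (g : PSL(2, K)) • mk K v hv = mk K (g.1 *ᵥ v) ((smul_ne_zero_iff_ne g).mpr hv) :=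
  rfl

theorem eq_one_of_smul_eq_self (g : PSL(2, K))
    (hinf : g • (infinity : ℙ K (Fin 2 → K)) = infinity)
    (h0 : g • ofAffine (0 : K) = ofAffine 0) (h1 : g • ofAffine (1 : K) = ofAffine 1) :
    g = 1 := by
  induction g using QuotientGroup.induction_on with | H g => ?_
  simp only [infinity, ofAffine, coe_smul_mk, mk_eq_mk_iff_mul_eq_mul, mulVec_fin_two,
    cons_val_zero, cons_val_one, mul_one, mul_zero, add_zero, zero_add] at hinf h0 h1
  have h10 : g 1 0 = 0 := hinf.symm
  have h11 : g 1 1 = g 0 0 := by linear_combination h0 + hinf - h1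
  have hdet : g 0 0 ^ 2 = 1 := by
    have := g.2
    rw [det_fin_two, h10, h11] at this
    linear_combination this
  rw [QuotientGroup.eq_one_iff, SpecialLinearGroup.mem_center_iff]
  refine ⟨g 0 0, hdet, ?_⟩
  ext i j
  fin_cases i <;> fin_cases j <;> simp [h0, h10, h11]

end Matrix.ProjectiveSpecialLinearGroup

namespace MulAction

variable {G α ι : Type*} [Group G] [MulAction G α]

theorem smul_eq_self_of_inter_eq_singleton {g : G} {s t : Set α} {a : α} (hs : g • s = s)
    (ht : g • t = t) (hst : s ∩ t = {a}) : g • a = a := by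
  have : g • (s ∩ t) = {g • a} := by rw [hst, Set.smul_set_singleton]
  rw [Set.smul_set_inter, hs, ht, hst, Set.singleton_eq_singleton_iff] at this
  exact this.symm

theorem smul_range_eq_of_smul_apply {g : G} {f : ι → α} (σ : Perm ι)
    (h : ∀ i, g • f i = f (σ i)) : g • Set.range f = Set.range f := by
  rw [Set.smul_set_range, funext h]
  exact σ.surjective.range_comp f

variable {f : ι → α} (hf : Function.Injective f)

noncomputable def rangeStabilizerToPerm : stabilizer G (Set.range f) →* Perm ι :=
  (Equiv.ofInjective f hf).symm.permCongrHom.toMonoidHom.comp (toPermHom _ (Set.range f))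

theorem apply_rangeStabilizerToPerm (g : stabilizer G (Set.range f)) (i : ι) :
    f (rangeStabilizerToPerm hf g i) = (g : G) • f i := by
  simp [rangeStabilizerToPerm, Equiv.permCongr_apply, Equiv.apply_ofInjective_symm]

theorem rangeStabilizerToPerm_eq_iff (g : stabilizer G (Set.range f)) (σ : Perm ι) :
    rangeStabilizerToPerm hf g = σ ↔ ∀ i, (g : G) • f i = f (σ i) := by
  simp only [Equiv.ext_iff, ← apply_rangeStabilizerToPerm hf, hf.eq_iff]

end MulAction

noncomputable def Subgroup.closureEquivClosureImage {G N : Type*} [Group G] [Group N]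
    (f : G →* N) (hf : Function.Injective f) (s : Set G) : closure s ≃* closure (f '' s) :=
  ((closure s).equivMapOfInjective f hf).trans (MulEquiv.subgroupCongr (f.map_closure s))

theorem closure_eq_alternatingGroup_fin_four :
    closure {c[1, 2, 3], c[0, 1] * c[2, 3]} = alternatingGroup (Fin 4) := by
  set σ : Perm (Fin 4) := c[1, 2, 3]
  set τ : Perm (Fin 4) := c[0, 1] * c[2, 3]
  apply le_antisymm
  · rw [closure_le]
    rintro _ (rfl | rfl) <;> rw [SetLike.mem_coe, Perm.mem_alternatingGroup] <;> decide
  · have hσ : σ ∈ closure {σ, τ} := subset_closure (by simp)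
    have hτ : τ ∈ closure {σ, τ} := subset_closure (by simp)
    -- `A₄ = V₄ ⋊ ⟨σ⟩`, where the Klein four-group `V₄` consists of `1` and the conjugates of `τ`.
    have hdecomp : ∀ x : Perm (Fin 4), Perm.sign x = 1 →
        ∃ v ∈ [1, τ, σ * τ * σ⁻¹, σ⁻¹ * τ * σ], ∃ k ∈ [0, 1, 2], x = v * σ ^ k := by
      decide
    intro x hx
    obtain ⟨v, hv, k, -, rfl⟩ := hdecomp x hx
    refine mul_mem ?_ (pow_mem hσ k)
    simp only [List.mem_cons, List.not_mem_nil, or_false] at hv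
    rcases hv with rfl | rfl | rfl | rfl
    · exact one_mem _
    · exact hτ
    · exact mul_mem (mul_mem hσ hτ) (inv_mem hσ)
    · exact mul_mem (mul_mem (inv_mem hσ) hτ) hσ

noncomputable def moebiusA : SL(2, ℂ) :=
  ⟨!![-I / (1 - I), I / (1 - I); 1 / (1 - I), 1 / (1 - I)], by
    have h : (1 : ℂ) - I ≠ 0 := by simp [sub_eq_zero, Complex.ext_iff]
    rw [det_fin_two_of]
    field_simp
    linear_combination (-1 : ℂ) * I_sq⟩

def moebiusB : SL(2, ℂ) := ⟨!![I, 0; 0, -I], by simp [det_fin_two_of]⟩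

theorem moebiusA_smul_mk (v : Fin 2 → ℂ) (hv : v ≠ 0) (w : Fin 2 → ℂ) (hw : w ≠ 0)
    (h : I * (v 1 - v 0) * w 1 = (v 0 + v 1) * w 0) :
    (moebiusA : PSL(2, ℂ)) • mk ℂ v hv = mk ℂ w hw := by
  have h1I : (1 : ℂ) - I ≠ 0 := by simp [sub_eq_zero, Complex.ext_iff]
  rw [ProjectiveSpecialLinearGroup.coe_smul_mk, mk_eq_mk_iff_mul_eq_mul]
  simp [moebiusA, vecHead, vecTail]
  field_simp
  linear_combination h

theorem moebiusB_smul_ofAffine (z : ℂ) : (moebiusB : PSL(2, ℂ)) • ofAffine z = ofAffine (-z) := by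
  rw [ofAffine, ofAffine, ProjectiveSpecialLinearGroup.coe_smul_mk, mk_eq_mk_iff_mul_eq_mul]
  simp [moebiusB, mul_comm]

theorem moebiusB_smul_infinity :
    (moebiusB : PSL(2, ℂ)) • (infinity : ℙ ℂ (Fin 2 → ℂ)) = infinity := by
  rw [infinity, ProjectiveSpecialLinearGroup.coe_smul_mk, mk_eq_mk_iff_mul_eq_mul]
  simp [moebiusB]

/-- Four pairwise non-adjacent faces of the octahedron with vertices `0, ∞, ±1, ±i`. -/
def octahedronFace : Fin 4 → Set (ℙ ℂ (Fin 2 → ℂ)) :=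
  ![{ofAffine 0, ofAffine 1, ofAffine I}, {ofAffine 0, ofAffine (-1), ofAffine (-I)},
    {infinity, ofAffine (-1), ofAffine I}, {infinity, ofAffine 1, ofAffine (-I)}]

theorem octahedronFace_injective : Function.Injective octahedronFace := by
  intro k j h
  have hinf := congrArg (infinity ∈ ·) h
  have h1 := congrArg (ofAffine 1 ∈ ·) h
  fin_cases k <;> fin_cases j <;> revert hinf h1 <;>
    norm_num [octahedronFace, ofAffine_injective.eq_iff, ofAffine_ne_infinity, infinity_ne_ofAffine,
      Complex.ext_iff]

theorem eq_one_of_forall_smul_octahedronFace (g : PSL(2, ℂ))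
    (h : ∀ k, g • octahedronFace k = octahedronFace k) : g = 1 := by
  refine ProjectiveSpecialLinearGroup.eq_one_of_smul_eq_self g
    (smul_eq_self_of_inter_eq_singleton (h 2) (h 3) ?_)
    (smul_eq_self_of_inter_eq_singleton (h 0) (h 1) ?_)
    (smul_eq_self_of_inter_eq_singleton (h 0) (h 3) ?_) <;>
  ext x <;>
  simp only [octahedronFace, Fin.isValue, cons_val_zero, cons_val_one, cons_val_two, cons_val_three,
    Set.mem_inter_iff, Set.mem_insert_iff, Set.mem_singleton_iff] <;>
  refine ⟨?_, by rintro rfl; simp⟩ <;>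
  rintro ⟨rfl | rfl | rfl, h⟩ <;> revert h <;>
    norm_num [ofAffine_injective.eq_iff, ofAffine_ne_infinity, infinity_ne_ofAffine, Complex.ext_iff]

theorem moebiusA_smul_octahedronFace (k : Fin 4) :
    (moebiusA : PSL(2, ℂ)) • octahedronFace k = octahedronFace (c[1, 2, 3] k) := by
  have h0 : (moebiusA : PSL(2, ℂ)) • ofAffine (0 : ℂ) = ofAffine I :=
    moebiusA_smul_mk _ _ _ _ (by simp)
  have h1 : (moebiusA : PSL(2, ℂ)) • ofAffine (1 : ℂ) = ofAffine 0 :=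
    moebiusA_smul_mk _ _ _ _ (by simp)
  have hI : (moebiusA : PSL(2, ℂ)) • ofAffine I = ofAffine 1 :=
    moebiusA_smul_mk _ _ _ _ (by simp [Complex.ext_iff])
  have hm1 : (moebiusA : PSL(2, ℂ)) • ofAffine (-1 : ℂ) = infinity :=
    moebiusA_smul_mk _ _ _ _ (by simp)
  have hmI : (moebiusA : PSL(2, ℂ)) • ofAffine (-I) = ofAffine (-1) :=
    moebiusA_smul_mk _ _ _ _ (by simp [Complex.ext_iff])
  have hinf : (moebiusA : PSL(2, ℂ)) • infinity = ofAffine (-I) :=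
    moebiusA_smul_mk _ _ _ _ (by simp)
  rw [show c[1, 2, 3] k = ![0, 2, 3, 1] k by revert k; decide]
  fin_cases k <;>
    simp [octahedronFace, Set.smul_set_insert, Set.smul_set_singleton, h0, h1, hI, hm1, hmI,
      hinf] <;> ext <;> simp <;> tauto

theorem moebiusB_smul_octahedronFace (k : Fin 4) :
    (moebiusB : PSL(2, ℂ)) • octahedronFace k =
      octahedronFace ((c[0, 1] * c[2, 3] : Perm (Fin 4)) k) := by
  rw [show (c[0, 1] * c[2, 3] : Perm (Fin 4)) k = ![1, 0, 3, 2] k by revert k; decide]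
  fin_cases k <;>
    simp [octahedronFace, Set.smul_set_insert, Set.smul_set_singleton, moebiusB_smul_ofAffine,
      moebiusB_smul_infinity]

/-- The Möbius transformations `A(z) = i(1−z)/(z+1)` and `B(z) = −z`,
viewed as elements of `PSL₂(ℂ) = SL₂(ℂ)/center` (using the determinant-1 matrix
representatives `(1/(1-i))·[[-i, i],[1, 1]]` and `[[i,0],[0,-i]]`), generate a
subgroup isomorphic to the alternating group `A₄`. -/
theorem origami_A4_moebius :
    Nonempty
      ((Subgroup.closure
        { QuotientGroup.mk (s := Subgroup.center (Matrix.SpecialLinearGroup (Fin 2) ℂ))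
            ⟨!![-I / (1 - I), I / (1 - I); 1 / (1 - I), 1 / (1 - I)], by
              have h : (1 : ℂ) - I ≠ 0 := by
                intro h
                have := congrArg Complex.im h
                simp at this
              rw [Matrix.det_fin_two_of]
              field_simp
              ring_nf
              simp only [show (I : ℂ) ^ 3 = -I by rw [pow_succ, Complex.I_sq]; ring,
                show (I : ℂ) ^ 2 = -1 from Complex.I_sq,
                show (I : ℂ) ^ 4 = 1 by rw [show (4 : ℕ) = 2 * 2 from rfl, pow_mul, Complex.I_sq]; ring]
              ring⟩,
          QuotientGroup.mk (s := Subgroup.center (Matrix.SpecialLinearGroup (Fin 2) ℂ))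
            ⟨!![I, 0; 0, -I], by simp [Matrix.det_fin_two_of, mul_neg, Complex.I_mul_I]⟩ } :
          Subgroup (Matrix.SpecialLinearGroup (Fin 2) ℂ ⧸
            Subgroup.center (Matrix.SpecialLinearGroup (Fin 2) ℂ)))
        ≃* alternatingGroup (Fin 4)) := by
  set S := stabilizer PSL(2, ℂ) (Set.range octahedronFace)
  let a : S := ⟨moebiusA, smul_range_eq_of_smul_apply _ moebiusA_smul_octahedronFace⟩
  let b : S := ⟨moebiusB, smul_range_eq_of_smul_apply _ moebiusB_smul_octahedronFace⟩
  set ρ := rangeStabilizerToPerm (G := PSL(2, ℂ)) octahedronFace_injective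
  have hρ : Function.Injective ρ := (injective_iff_map_eq_one ρ).mpr fun g hg =>
    Subtype.ext <| eq_one_of_forall_smul_octahedronFace g <| by
      simpa using (rangeStabilizerToPerm_eq_iff _ g 1).mp hg
  have hρa : ρ a = c[1, 2, 3] :=
    (rangeStabilizerToPerm_eq_iff _ a _).mpr moebiusA_smul_octahedronFace
  have hρb : ρ b = c[0, 1] * c[2, 3] :=
    (rangeStabilizerToPerm_eq_iff _ b _).mpr moebiusB_smul_octahedronFace
  have hS : S.subtype '' {a, b} = {(moebiusA : PSL(2, ℂ)), (moebiusB : PSL(2, ℂ))} :=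
    Set.image_pair _ _ _
  have hA4 : ρ '' {a, b} = {c[1, 2, 3], c[0, 1] * c[2, 3]} := by rw [Set.image_pair, hρa, hρb]
  exact ⟨(MulEquiv.subgroupCongr (congrArg Subgroup.closure hS)).symm.trans
    ((closureEquivClosureImage S.subtype Subtype.val_injective {a, b}).symm.trans
      ((closureEquivClosureImage ρ hρ {a, b}).trans
        (MulEquiv.subgroupCongr (by rw [hA4, closure_eq_alternatingGroup_fin_four]))))⟩
end

section
/- Let K be the HNN extension of D_n (n ≥ 2) along the isomorphism ⟨B⟩ → ⟨AB⟩, B ↦ AB, with stable letter T. If Γ ≤ K is a torsion-free subgroup of finite index d, then Γ is a free group of rank 1 + d(n−1)/(2n), and this number is an integer. -/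
open HNNExtension

/-- The former Mathlib definition (removed since): a monoid is torsion-free if every
non-identity element has infinite order. -/
def Monoid.IsTorsionFree (G : Type*) [Monoid G] : Prop :=
  ∀ g : G, g ≠ 1 → ¬IsOfFinOrder g

namespace HnnDih
attribute [-simp] DihedralGroup.r_mul_sr
variable {n : ℕ}
local notation "bb" => DihedralGroup.sr (0 : ZMod n)
local notation "ab" => DihedralGroup.r (1 : ZMod n) * DihedralGroup.sr (0 : ZMod n)

variable (φ : (Subgroup.closure {DihedralGroup.sr 0} : Subgroup (DihedralGroup n)) ≃*
      (Subgroup.closure {DihedralGroup.r 1 * DihedralGroup.sr 0} : Subgroup (DihedralGroup n)))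

abbrev K := HNNExtension (DihedralGroup n) (Subgroup.closure {bb}) (Subgroup.closure {ab}) φ

lemma bb_sq : (bb : DihedralGroup n) * bb = 1 := by
  simp [DihedralGroup.sr_mul_sr, DihedralGroup.one_def, -DihedralGroup.r_zero]

lemma ab_sq : (ab : DihedralGroup n) * (ab) = 1 := by
  simp [DihedralGroup.r_mul_sr, DihedralGroup.sr_mul_r, DihedralGroup.sr_mul_sr,
    DihedralGroup.r_mul_r, DihedralGroup.one_def, -DihedralGroup.r_zero, mul_assoc]

lemma ab_inv : (ab : DihedralGroup n)⁻¹ = ab := inv_eq_of_mul_eq_one_right (ab_sq)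

lemma mem_closure_bb (x : DihedralGroup n) (hx : x ∈ Subgroup.closure {bb}) :
    x = 1 ∨ x = bb := by
  induction hx using Subgroup.closure_induction with
  | mem y hy => right; simpa using hy
  | one => left; rfl
  | mul y z hy hz ihy ihz =>
    rcases ihy with h | h <;> rcases ihz with h' | h' <;> subst h h' <;>
      simp [bb_sq, DihedralGroup.one_def, -DihedralGroup.r_zero]
  | inv y hy ihy =>
    rcases ihy with h | h <;> subst h <;> simp

lemma t_mul_of_bb (hφ : (φ ⟨DihedralGroup.sr 0, Subgroup.subset_closure (Set.mem_singleton _)⟩ :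
        DihedralGroup n) = DihedralGroup.r 1 * DihedralGroup.sr 0) :
    (t : K φ) * of bb = of (ab) * t := by
  have := t_mul_of (φ := φ) ⟨bb, Subgroup.subset_closure (Set.mem_singleton _)⟩
  rw [this, hφ]

variable (Γ : Subgroup (K φ))

abbrev S := K φ ⧸ Γ

noncomputable def bp : S φ Γ := QuotientGroup.mk 1

lemma smul_bp (k : K φ) : k • (bp φ Γ) = QuotientGroup.mk k := by
  show QuotientGroup.mk _ = _
  norm_num

lemma mem_iff_smul_bp (k : K φ) : k • (bp φ Γ) = bp φ Γ ↔ k ∈ Γ := by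
  rw [smul_bp]
  constructor
  · intro h
    have := (QuotientGroup.eq (s := Γ)).1 h
    simpa using this
  · intro h
    exact (QuotientGroup.eq (s := Γ)).2 (by simpa using h)

section torsion
set_option linter.unusedSectionVars false
variable [NeZero n]

/-- nontrivial torsion elements act freely -/
lemma torsion_free_action (htf : Monoid.IsTorsionFree Γ)
    (k : K φ) (hk : IsOfFinOrder k) (hk1 : k ≠ 1) (s : S φ Γ) : k • s ≠ s := by
  intro h
  obtain ⟨x, rfl⟩ := QuotientGroup.mk_surjective s
  have hmem : x⁻¹ * k * x ∈ Γ := by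
    have : (QuotientGroup.mk (k * x) : S φ Γ) = QuotientGroup.mk x := h
    have := (QuotientGroup.eq (s := Γ)).1 this.symm
    simpa [mul_assoc] using this
  have hconj : IsOfFinOrder (x⁻¹ * k * x) := by
    have hsc : SemiconjBy x⁻¹ k (x⁻¹ * k * x) := by
      unfold SemiconjBy
      group
    rw [← orderOf_pos_iff] at hk ⊢
    rwa [← SemiconjBy.orderOf_eq _ hsc]
  have hfo : IsOfFinOrder ((⟨_, hmem⟩ : Γ)) := Submonoid.isOfFinOrder_coe.1 hconj
  have := htf _ (fun hh => ?_) hfo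
  · exact this
  · apply hk1
    have : x⁻¹ * k * x = 1 := by
      simpa using congrArg Subtype.val hh
    have := congrArg (fun y => x * y * x⁻¹) this
    simpa [mul_assoc] using this

lemma of_ne_one (g : DihedralGroup n) (hg : g ≠ 1) : (of g : K φ) ≠ 1 := by
  intro h
  apply hg
  have : (of g : K φ) = of 1 := by simpa using h
  exact HNNExtension.of_injective (φ := φ) this

lemma of_finOrder (g : DihedralGroup n) : IsOfFinOrder (of g : K φ) :=
  MonoidHom.isOfFinOrder _ (isOfFinOrder_of_finite g)

lemma free_action (htf : Monoid.IsTorsionFree Γ)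
    (g : DihedralGroup n) (hg : g ≠ 1) (s : S φ Γ) : (of g : K φ) • s ≠ s :=
  torsion_free_action φ Γ htf _ (of_finOrder φ g) (of_ne_one φ g hg) s

end torsion

section orbits
set_option linter.unusedSectionVars false
variable [NeZero n]

/-- setoid of `D_n`-orbits on `S` -/
def osetoid : Setoid (S φ Γ) where
  r s s' := ∃ g : DihedralGroup n, (of g : K φ) • s = s'
  iseqv := by
    constructor
    · exact fun s => ⟨1, by simp⟩
    · rintro s s' ⟨g, rfl⟩
      exact ⟨g⁻¹, by simp⟩
    · rintro s s' s'' ⟨g, rfl⟩ ⟨g', rfl⟩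
      exact ⟨g' * g, by simp [mul_smul]⟩

def O := Quotient (osetoid φ Γ)

def orb : S φ Γ → O φ Γ := Quotient.mk _

lemma orb_eq_iff {s s' : S φ Γ} : orb φ Γ s = orb φ Γ s' ↔
    ∃ g : DihedralGroup n, (of g : K φ) • s = s' :=
  ⟨fun h => Quotient.exact h, fun h => Quotient.sound h⟩

lemma orb_of_smul (g : DihedralGroup n) (s : S φ Γ) :
    orb φ Γ ((of g : K φ) • s) = orb φ Γ s :=
  (orb_eq_iff φ Γ).2 ⟨g⁻¹, by simp [← mul_smul]⟩

lemma orb_surj (o : O φ Γ) : ∃ s, orb φ Γ s = o := by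
  obtain ⟨s, rfl⟩ := Quotient.mk_surjective o
  exact ⟨s, rfl⟩

/-- setoid of `⟨ab⟩`-orbits ("pairs") on `S` -/
def psetoid : Setoid (S φ Γ) where
  r s s' := s' = s ∨ s' = (of (ab) : K φ) • s
  iseqv := by
    constructor
    · exact fun s => Or.inl rfl
    · rintro s s' (rfl | rfl)
      · exact Or.inl rfl
      · right
        rw [← mul_smul, ← map_mul, ab_sq]
        simp
    · rintro s s' s'' (rfl | rfl) h
      · exact h
      · rcases h with rfl | rfl
        · exact Or.inr rfl
        · left
          rw [← mul_smul, ← map_mul, ab_sq]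
          simp

def P := Quotient (psetoid φ Γ)

def pr : S φ Γ → P φ Γ := Quotient.mk _

lemma pr_eq_iff {s s' : S φ Γ} : pr φ Γ s = pr φ Γ s' ↔
    (s' = s ∨ s' = (of (ab) : K φ) • s) :=
  ⟨fun h => Quotient.exact h, fun h => Quotient.sound h⟩

lemma pr_surj (p : P φ Γ) : ∃ s, pr φ Γ s = p := by
  obtain ⟨s, rfl⟩ := Quotient.mk_surjective p
  exact ⟨s, rfl⟩

lemma pr_ab_smul (s : S φ Γ) : pr φ Γ ((of (ab) : K φ) • s) = pr φ Γ s :=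
  ((pr_eq_iff φ Γ).2 (Or.inr rfl)).symm

/-- the root orbit -/
noncomputable def root : O φ Γ := orb φ Γ (bp φ Γ)

def reach : O φ Γ → ℕ → Prop
  | o, 0 => o = root φ Γ
  | o, (m+1) => ∃ s : S φ Γ, reach (orb φ Γ s) m ∧
      (orb φ Γ ((t : K φ) • s) = o ∨ orb φ Γ ((t : K φ)⁻¹ • s) = o)

lemma reach_exists (o : O φ Γ) : ∃ m, reach φ Γ o m := by
  obtain ⟨s, rfl⟩ := orb_surj φ Γ o
  obtain ⟨k, rfl⟩ := QuotientGroup.mk_surjective s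
  rw [show (QuotientGroup.mk k : S φ Γ) = k • bp φ Γ from (smul_bp φ Γ k).symm]
  have main : ∀ k : K φ, ∀ s : S φ Γ,
      ((∃ m, reach φ Γ (orb φ Γ s) m) ↔ (∃ m, reach φ Γ (orb φ Γ (k • s)) m)) := by
    intro k
    induction k using HNNExtension.induction_on with
    | of g =>
      intro s
      rw [orb_of_smul]
    | t =>
      intro s
      constructor
      · rintro ⟨m, hm⟩
        exact ⟨m + 1, ⟨s, hm, Or.inl rfl⟩⟩
      · rintro ⟨m, hm⟩
        refine ⟨m + 1, ⟨(t : K φ) • s, hm, Or.inr ?_⟩⟩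
        rw [← mul_smul]
        simp
    | mul k k' ih ih' =>
      intro s
      rw [ih' s, mul_smul, ih (k' • s)]
    | inv k ih =>
      intro s
      have := (ih (k⁻¹ • s)).symm
      rwa [← mul_smul, mul_inv_cancel, one_smul] at this
  rw [← main k (bp φ Γ)]
  exact ⟨0, rfl⟩

open Classical in
noncomputable def depth (o : O φ Γ) : ℕ := Nat.find (reach_exists φ Γ o)

open Classical in
lemma reach_depth (o : O φ Γ) : reach φ Γ o (depth φ Γ o) := Nat.find_spec (reach_exists φ Γ o)

open Classical in
lemma depth_le {o : O φ Γ} {m : ℕ} (h : reach φ Γ o m) : depth φ Γ o ≤ m :=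
  Nat.find_le h

lemma depth_root : depth φ Γ (root φ Γ) = 0 :=
  Nat.le_zero.1 (depth_le φ Γ (by show root φ Γ = root φ Γ; rfl))

lemma eq_root_of_depth_zero {o : O φ Γ} (h : depth φ Γ o = 0) : o = root φ Γ := by
  have := reach_depth φ Γ o
  rwa [h] at this

lemma exists_edge {o : O φ Γ} (h : o ≠ root φ Γ) :
    ∃ s : S φ Γ, depth φ Γ (orb φ Γ s) < depth φ Γ o ∧
      (orb φ Γ ((t : K φ) • s) = o ∨ orb φ Γ ((t : K φ)⁻¹ • s) = o) := by
  have hd : depth φ Γ o ≠ 0 := fun h0 => h (eq_root_of_depth_zero φ Γ h0)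
  obtain ⟨m, hm⟩ : ∃ m, depth φ Γ o = m + 1 := ⟨(depth φ Γ o) - 1, by omega⟩
  have := reach_depth φ Γ o
  rw [hm] at this
  obtain ⟨s, hs, hor⟩ := this
  exact ⟨s, by rw [hm]; exact Nat.lt_succ_of_le (depth_le φ Γ hs), hor⟩

open Classical in
noncomputable def repκ (o : O φ Γ) : S φ Γ × K φ :=
  if h : o = root φ Γ then (bp φ Γ, 1)
  else
    let s := (exists_edge φ Γ h).choose
    have hs := (exists_edge φ Γ h).choose_spec
    let pk := repκ (orb φ Γ s)
    let g : DihedralGroup n := if hg : ∃ g : DihedralGroup n, (of g : K φ) • pk.1 = s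
      then hg.choose else 1
    let ks := (of g : K φ) * pk.2
    if orb φ Γ ((t : K φ) • s) = o then ((t : K φ) • s, (t : K φ) * ks)
    else ((t : K φ)⁻¹ • s, (t : K φ)⁻¹ * ks)
termination_by depth φ Γ o
decreasing_by exact hs.1

noncomputable def rep (o : O φ Γ) : S φ Γ := (repκ φ Γ o).1
noncomputable def κ (o : O φ Γ) : K φ := (repκ φ Γ o).2

end orbits

section transversal
set_option linter.unusedSectionVars false
variable [NeZero n]

lemma rep_root : rep φ Γ (root φ Γ) = bp φ Γ ∧ κ φ Γ (root φ Γ) = 1 := by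
  unfold rep κ
  rw [repκ]
  simp only [dif_pos rfl]
  exact ⟨rfl, rfl⟩

lemma rep_spec : ∀ m (o : O φ Γ), depth φ Γ o ≤ m →
    orb φ Γ (rep φ Γ o) = o ∧ (κ φ Γ o) • bp φ Γ = rep φ Γ o := by
  intro m
  induction m with
  | zero =>
    intro o ho
    have h := eq_root_of_depth_zero φ Γ (Nat.le_zero.1 ho)
    subst h
    rw [(rep_root φ Γ).1, (rep_root φ Γ).2]
    exact ⟨rfl, one_smul _ _⟩
  | succ m ih =>
    intro o ho
    by_cases h : o = root φ Γ
    · subst h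
      rw [(rep_root φ Γ).1, (rep_root φ Γ).2]
      exact ⟨rfl, one_smul _ _⟩
    · unfold rep κ
      rw [repκ, dif_neg h]
      have hs := (exists_edge φ Γ h).choose_spec
      set s := (exists_edge φ Γ h).choose with hs_def
      have hihm : depth φ Γ (orb φ Γ s) ≤ m := by
        have h1 := hs.1
        omega
      have IH := ih (orb φ Γ s) hihm
      have hex : ∃ g : DihedralGroup n, (of g : K φ) • (repκ φ Γ (orb φ Γ s)).1 = s :=
        (orb_eq_iff φ Γ).1 IH.1
      simp only [dif_pos hex]
      by_cases hA : orb φ Γ ((t : K φ) • s) = o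
      · simp +zetaDelta only [if_pos hA, dif_pos hex]
        refine ⟨hA, ?_⟩
        rw [mul_smul, mul_smul]
        show (t : K φ) • ((of hex.choose : K φ) • (κ φ Γ (orb φ Γ s)) • bp φ Γ) = _
        rw [IH.2]
        exact congrArg (fun z => (t : K φ) • z) hex.choose_spec
      · simp +zetaDelta only [if_neg hA, dif_pos hex]
        have hB := hs.2.resolve_left hA
        refine ⟨hB, ?_⟩
        rw [mul_smul, mul_smul]
        show (t : K φ)⁻¹ • ((of hex.choose : K φ) • (κ φ Γ (orb φ Γ s)) • bp φ Γ) = _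
        rw [IH.2]
        exact congrArg (fun z => (t : K φ)⁻¹ • z) hex.choose_spec

lemma orb_rep (o : O φ Γ) : orb φ Γ (rep φ Γ o) = o :=
  (rep_spec φ Γ (depth φ Γ o) o le_rfl).1

lemma κ_smul_bp (o : O φ Γ) : (κ φ Γ o) • bp φ Γ = rep φ Γ o :=
  (rep_spec φ Γ (depth φ Γ o) o le_rfl).2

lemma exists_g (s : S φ Γ) : ∃ g : DihedralGroup n,
    (of g : K φ) • rep φ Γ (orb φ Γ s) = s := by
  have := orb_rep φ Γ (orb φ Γ s)
  exact (orb_eq_iff φ Γ).1 this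

noncomputable def gElt (s : S φ Γ) : DihedralGroup n := (exists_g φ Γ s).choose

lemma gElt_spec (s : S φ Γ) : (of (gElt φ Γ s) : K φ) • rep φ Γ (orb φ Γ s) = s :=
  (exists_g φ Γ s).choose_spec

/-- the transversal -/
noncomputable def kk (s : S φ Γ) : K φ := (of (gElt φ Γ s) : K φ) * κ φ Γ (orb φ Γ s)

lemma kk_smul_bp (s : S φ Γ) : (kk φ Γ s) • bp φ Γ = s := by
  rw [kk, mul_smul, κ_smul_bp, gElt_spec]

variable (htf : Monoid.IsTorsionFree Γ)
include htf

lemma g_unique {g g' : DihedralGroup n} {s : S φ Γ}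
    (hh : (of g : K φ) • s = (of g' : K φ) • s) : g = g' := by
  by_contra hne
  have : g'⁻¹ * g ≠ 1 := by
    intro hcon
    apply hne
    have := congrArg (g' * ·) hcon
    simpa using this
  apply free_action φ Γ htf _ this s
  rw [map_mul, mul_smul, hh, ← mul_smul, ← map_mul, inv_mul_cancel]
  simp

lemma gElt_eq {g : DihedralGroup n} {s : S φ Γ}
    (hh : (of g : K φ) • rep φ Γ (orb φ Γ s) = s) : gElt φ Γ s = g :=
  g_unique φ Γ htf ((gElt_spec φ Γ s).trans hh.symm)

lemma gElt_smul (g : DihedralGroup n) (s : S φ Γ) :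
    gElt φ Γ ((of g : K φ) • s) = g * gElt φ Γ s := by
  apply gElt_eq φ Γ htf
  rw [orb_of_smul, map_mul, mul_smul, gElt_spec]

lemma kk_smul (g : DihedralGroup n) (s : S φ Γ) :
    kk φ Γ ((of g : K φ) • s) = (of g : K φ) * kk φ Γ s := by
  rw [kk, kk, gElt_smul φ Γ htf, orb_of_smul, map_mul, mul_assoc]

lemma gElt_rep (o : O φ Γ) : gElt φ Γ (rep φ Γ o) = 1 := by
  apply gElt_eq φ Γ htf
  rw [orb_rep]
  simp

lemma kk_rep (o : O φ Γ) : kk φ Γ (rep φ Γ o) = κ φ Γ o := by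
  rw [kk, gElt_rep φ Γ htf, orb_rep]
  simp

lemma kk_bp : kk φ Γ (bp φ Γ) = 1 := by
  have : bp φ Γ = rep φ Γ (root φ Γ) := (rep_root φ Γ).1.symm
  rw [this, kk_rep φ Γ htf, (rep_root φ Γ).2]

end transversal

section structure_lemmas
set_option linter.unusedSectionVars false
variable [NeZero n]

open Classical in
noncomputable def esrc (o : O φ Γ) : S φ Γ :=
  if h : o = root φ Γ then bp φ Γ else (exists_edge φ Γ h).choose

def caseA (o : O φ Γ) : Prop := orb φ Γ ((t : K φ) • esrc φ Γ o) = o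

open Classical in
noncomputable def tgt (o : O φ Γ) : S φ Γ :=
  if caseA φ Γ o then (t : K φ) • esrc φ Γ o else esrc φ Γ o

lemma depth_esrc {o : O φ Γ} (h : o ≠ root φ Γ) :
    depth φ Γ (orb φ Γ (esrc φ Γ o)) < depth φ Γ o := by
  rw [esrc, dif_neg h]
  exact (exists_edge φ Γ h).choose_spec.1

lemma esrc_or {o : O φ Γ} (h : o ≠ root φ Γ) :
    orb φ Γ ((t : K φ) • esrc φ Γ o) = o ∨ orb φ Γ ((t : K φ)⁻¹ • esrc φ Γ o) = o := by
  rw [esrc, dif_neg h]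
  exact (exists_edge φ Γ h).choose_spec.2

variable (htf : Monoid.IsTorsionFree Γ)
include htf

lemma struct_eq {o : O φ Γ} (h : o ≠ root φ Γ) :
    (caseA φ Γ o → rep φ Γ o = (t : K φ) • esrc φ Γ o ∧
      κ φ Γ o = (t : K φ) * kk φ Γ (esrc φ Γ o)) ∧
    (¬ caseA φ Γ o → rep φ Γ o = (t : K φ)⁻¹ • esrc φ Γ o ∧
      κ φ Γ o = (t : K φ)⁻¹ * kk φ Γ (esrc φ Γ o)) := by
  classical
  have hesrc : esrc φ Γ o = (exists_edge φ Γ h).choose := by rw [esrc, dif_neg h]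
  have hunfold : repκ φ Γ o =
      (if orb φ Γ ((t : K φ) • esrc φ Γ o) = o
        then ((t : K φ) • esrc φ Γ o, (t : K φ) * kk φ Γ (esrc φ Γ o))
        else ((t : K φ)⁻¹ • esrc φ Γ o, (t : K φ)⁻¹ * kk φ Γ (esrc φ Γ o))) := by
    rw [repκ, dif_neg h]
    have hex : ∃ g : DihedralGroup n,
        (of g : K φ) • (repκ φ Γ (orb φ Γ ((exists_edge φ Γ h).choose))).1 =
          (exists_edge φ Γ h).choose :=
      (orb_eq_iff φ Γ).1 (orb_rep φ Γ _)
    simp only [dif_pos hex]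
    have hg : gElt φ Γ (esrc φ Γ o) = hex.choose := by
      apply gElt_eq φ Γ htf
      rw [hesrc]
      exact hex.choose_spec
    have hkk : kk φ Γ (esrc φ Γ o) =
        (of hex.choose : K φ) * (repκ φ Γ (orb φ Γ ((exists_edge φ Γ h).choose))).2 := by
      rw [kk, hg, hesrc]
      rfl
    rw [← hkk, ← hesrc]
  constructor
  · intro hA
    have hA' : orb φ Γ ((t : K φ) • esrc φ Γ o) = o := hA
    rw [if_pos hA'] at hunfold
    exact ⟨congrArg Prod.fst hunfold, congrArg Prod.snd hunfold⟩
  · intro hA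
    have hA' : ¬ orb φ Γ ((t : K φ) • esrc φ Γ o) = o := hA
    rw [if_neg hA'] at hunfold
    exact ⟨congrArg Prod.fst hunfold, congrArg Prod.snd hunfold⟩

omit htf in
lemma orbB {o : O φ Γ} (h : o ≠ root φ Γ) (hA : ¬ caseA φ Γ o) :
    orb φ Γ ((t : K φ)⁻¹ • esrc φ Γ o) = o :=
  (esrc_or φ Γ h).resolve_left hA

end structure_lemmas

section gammasec
set_option linter.unusedSectionVars false
variable [NeZero n]

noncomputable def γmap (s : S φ Γ) : K φ :=
  (kk φ Γ ((t : K φ) • s))⁻¹ * (t : K φ) * kk φ Γ s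

lemma γmap_mem (s : S φ Γ) : γmap φ Γ s ∈ Γ := by
  rw [← mem_iff_smul_bp, γmap, mul_smul, mul_smul, kk_smul_bp]
  rw [inv_smul_eq_iff, kk_smul_bp]

variable (hφ : (φ ⟨DihedralGroup.sr 0, Subgroup.subset_closure (Set.mem_singleton _)⟩ :
        DihedralGroup n) = DihedralGroup.r 1 * DihedralGroup.sr 0)
variable (htf : Monoid.IsTorsionFree Γ)
include hφ htf

lemma γmap_pair (s : S φ Γ) : γmap φ Γ ((of bb : K φ) • s) = γmap φ Γ s := by
  have h1 : (t : K φ) • ((of bb : K φ) • s) = (of ab : K φ) • ((t : K φ) • s) := by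
    rw [← mul_smul, ← mul_smul, t_mul_of_bb φ hφ]
  rw [γmap, h1, kk_smul φ Γ htf, kk_smul φ Γ htf, γmap]
  rw [mul_inv_rev]
  have h2 : (of ab : K φ)⁻¹ * ((of ab : K φ) * (t : K φ)) = (t : K φ) := by group
  calc (kk φ Γ ((t:K φ) • s))⁻¹ * (of ab : K φ)⁻¹ * (t:K φ) * ((of bb : K φ) * kk φ Γ s)
      = (kk φ Γ ((t:K φ) • s))⁻¹ * ((of ab : K φ)⁻¹ * ((t:K φ) * (of bb : K φ))) * kk φ Γ s := by
        group
    _ = (kk φ Γ ((t:K φ) • s))⁻¹ * ((of ab : K φ)⁻¹ * ((of ab : K φ) * (t:K φ))) * kk φ Γ s := by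
        rw [t_mul_of_bb φ hφ]
    _ = γmap φ Γ s := by rw [h2]; unfold γmap; group

omit hφ in
lemma γmap_treeA {o : O φ Γ} (h : o ≠ root φ Γ) (hA : caseA φ Γ o) :
    γmap φ Γ (esrc φ Γ o) = 1 := by
  have hst := ((struct_eq φ Γ htf h).1 hA)
  rw [γmap, ← hst.1, kk_rep φ Γ htf, hst.2]
  group

omit hφ in
lemma γmap_treeB {o : O φ Γ} (h : o ≠ root φ Γ) (hA : ¬ caseA φ Γ o) :
    γmap φ Γ (rep φ Γ o) = 1 := by
  have hst := ((struct_eq φ Γ htf h).2 hA)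
  have h1 : (t : K φ) • rep φ Γ o = esrc φ Γ o := by
    rw [hst.1, ← mul_smul]
    simp
  rw [γmap, h1, kk_rep φ Γ htf, hst.2]
  group

end gammasec

section targets
set_option linter.unusedSectionVars false
variable [NeZero n]

noncomputable def tp (o : O φ Γ) : P φ Γ := pr φ Γ (tgt φ Γ o)

variable (hφ : (φ ⟨DihedralGroup.sr 0, Subgroup.subset_closure (Set.mem_singleton _)⟩ :
        DihedralGroup n) = DihedralGroup.r 1 * DihedralGroup.sr 0)
include hφ

lemma tinv_ab_smul (s : S φ Γ) :
    (t : K φ)⁻¹ • ((of ab : K φ) • s) = (of bb : K φ) • ((t : K φ)⁻¹ • s) := by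
  rw [← mul_smul, ← mul_smul]
  congr 1
  rw [inv_mul_eq_iff_eq_mul, ← mul_assoc, t_mul_of_bb φ hφ]
  group

lemma pr_orbs {x x' : S φ Γ} (h : pr φ Γ x = pr φ Γ x') :
    orb φ Γ x = orb φ Γ x' ∧ orb φ Γ ((t : K φ)⁻¹ • x) = orb φ Γ ((t : K φ)⁻¹ • x') := by
  rcases (pr_eq_iff φ Γ).1 h with rfl | rfl
  · exact ⟨rfl, rfl⟩
  · constructor
    · rw [orb_of_smul]
    · rw [tinv_ab_smul φ Γ hφ, orb_of_smul]

omit hφ in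
lemma orb_tgt {o : O φ Γ} (h : o ≠ root φ Γ) (htf : Monoid.IsTorsionFree Γ) :
    (caseA φ Γ o → orb φ Γ (tgt φ Γ o) = o ∧
        orb φ Γ ((t: K φ)⁻¹ • tgt φ Γ o) = orb φ Γ (esrc φ Γ o)) ∧
    (¬ caseA φ Γ o → orb φ Γ (tgt φ Γ o) = orb φ Γ (esrc φ Γ o) ∧
        orb φ Γ ((t: K φ)⁻¹ • tgt φ Γ o) = o) := by
  classical
  constructor
  · intro hA
    have htg : tgt φ Γ o = (t : K φ) • esrc φ Γ o := if_pos hA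
    refine ⟨htg ▸ hA, ?_⟩
    rw [htg, ← mul_smul]
    simp
  · intro hA
    have htg : tgt φ Γ o = esrc φ Γ o := if_neg hA
    exact ⟨by rw [htg], by rw [htg]; exact orbB φ Γ h hA⟩

lemma tp_inj (htf : Monoid.IsTorsionFree Γ) {o₁ o₂ : O φ Γ}
    (h₁ : o₁ ≠ root φ Γ) (h₂ : o₂ ≠ root φ Γ) (heq : tp φ Γ o₁ = tp φ Γ o₂) :
    o₁ = o₂ := by
  have horbs := pr_orbs φ Γ hφ heq
  have hd₁ := depth_esrc φ Γ h₁
  have hd₂ := depth_esrc φ Γ h₂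
  by_cases hA₁ : caseA φ Γ o₁ <;> by_cases hA₂ : caseA φ Γ o₂
  · have e₁ := (orb_tgt φ Γ h₁ htf).1 hA₁
    have e₂ := (orb_tgt φ Γ h₂ htf).1 hA₂
    rw [← e₁.1, ← e₂.1]
    exact horbs.1
  · have e₁ := (orb_tgt φ Γ h₁ htf).1 hA₁
    have e₂ := (orb_tgt φ Γ h₂ htf).2 hA₂
    exfalso
    have c1 : o₁ = orb φ Γ (esrc φ Γ o₂) := by rw [← e₁.1, horbs.1, e₂.1]
    have c2 : o₂ = orb φ Γ (esrc φ Γ o₁) := by rw [← e₂.2, ← horbs.2, e₁.2]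
    have d1 : depth φ Γ o₁ < depth φ Γ o₂ := by rw [c1]; exact hd₂
    have d2 : depth φ Γ o₂ < depth φ Γ o₁ := by rw [c2]; exact hd₁
    omega
  · have e₁ := (orb_tgt φ Γ h₁ htf).2 hA₁
    have e₂ := (orb_tgt φ Γ h₂ htf).1 hA₂
    exfalso
    have c1 : o₂ = orb φ Γ (esrc φ Γ o₁) := by rw [← e₂.1, ← horbs.1, e₁.1]
    have c2 : o₁ = orb φ Γ (esrc φ Γ o₂) := by rw [← e₁.2, horbs.2, e₂.2]
    have d1 : depth φ Γ o₂ < depth φ Γ o₁ := by rw [c1]; exact hd₁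
    have d2 : depth φ Γ o₁ < depth φ Γ o₂ := by rw [c2]; exact hd₂
    omega
  · have e₁ := (orb_tgt φ Γ h₁ htf).2 hA₁
    have e₂ := (orb_tgt φ Γ h₂ htf).2 hA₂
    rw [← e₁.2, ← e₂.2]
    exact horbs.2

end targets

section generation
set_option linter.unusedSectionVars false
variable [NeZero n]

def Eset : Set (P φ Γ) := {p | ∀ o : O φ Γ, o ≠ root φ Γ → tp φ Γ o ≠ p}

noncomputable def prep (p : P φ Γ) : S φ Γ := Quotient.out p

lemma pr_prep (p : P φ Γ) : pr φ Γ (prep φ Γ p) = p := Quotient.out_eq p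

noncomputable def γgen (p : P φ Γ) : K φ := γmap φ Γ ((t : K φ)⁻¹ • prep φ Γ p)

noncomputable def Cgrp : Subgroup (K φ) := Subgroup.closure (γgen φ Γ '' Eset φ Γ)

variable (hφ : (φ ⟨DihedralGroup.sr 0, Subgroup.subset_closure (Set.mem_singleton _)⟩ :
        DihedralGroup n) = DihedralGroup.r 1 * DihedralGroup.sr 0)
variable (htf : Monoid.IsTorsionFree Γ)
include hφ htf

lemma γmap_eq_of_pr_eq {s s' : S φ Γ} (h : pr φ Γ ((t : K φ) • s) = pr φ Γ ((t : K φ) • s')) :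
    γmap φ Γ s' = γmap φ Γ s := by
  rcases (pr_eq_iff φ Γ).1 h with h' | h'
  · rw [smul_left_cancel_iff] at h'
    rw [h']
  · have : s' = (of bb : K φ) • s := by
      have := congrArg (fun z => (t : K φ)⁻¹ • z) h'
      simp only [inv_smul_smul] at this
      rw [this, tinv_ab_smul φ Γ hφ, inv_smul_smul]
    rw [this, γmap_pair φ Γ hφ htf]

lemma γmap_mem_C (s : S φ Γ) : γmap φ Γ s ∈ Cgrp φ Γ := by
  by_cases hp : pr φ Γ ((t : K φ) • s) ∈ Eset φ Γ
  · have h1 : γmap φ Γ s = γgen φ Γ (pr φ Γ ((t : K φ) • s)) := by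
      rw [γgen]
      apply (γmap_eq_of_pr_eq φ Γ hφ htf _).symm
      rw [smul_inv_smul, pr_prep]
    rw [h1]
    exact Subgroup.subset_closure ⟨_, hp, rfl⟩
  · simp only [Eset, Set.mem_setOf_eq, not_forall] at hp
    obtain ⟨o, ho, hto⟩ := hp
    rw [not_not] at hto
    by_cases hA : caseA φ Γ o
    · have htg : tgt φ Γ o = (t : K φ) • esrc φ Γ o := if_pos hA
      have : γmap φ Γ s = γmap φ Γ (esrc φ Γ o) := by
        apply γmap_eq_of_pr_eq φ Γ hφ htf
        rw [← htg]
        exact hto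
      rw [this, γmap_treeA φ Γ htf ho hA]
      exact Subgroup.one_mem _
    · have htg : tgt φ Γ o = esrc φ Γ o := if_neg hA
      have hrep : (t : K φ) • rep φ Γ o = esrc φ Γ o := by
        rw [((struct_eq φ Γ htf ho).2 hA).1, ← mul_smul]
        simp
      have : γmap φ Γ s = γmap φ Γ (rep φ Γ o) := by
        apply γmap_eq_of_pr_eq φ Γ hφ htf
        rw [hrep, ← htg]
        exact hto
      rw [this, γmap_treeB φ Γ htf ho hA]
      exact Subgroup.one_mem _

lemma schreier (k : K φ) : ∀ s : S φ Γ,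
    (kk φ Γ (k • s))⁻¹ * k * kk φ Γ s ∈ Cgrp φ Γ := by
  induction k using HNNExtension.induction_on with
  | of g =>
    intro s
    rw [kk_smul φ Γ htf]
    have : ((of g : K φ) * kk φ Γ s)⁻¹ * of g * kk φ Γ s = 1 := by group
    rw [this]
    exact Subgroup.one_mem _
  | t =>
    intro s
    exact γmap_mem_C φ Γ hφ htf s
  | mul k k' ih ih' =>
    intro s
    have key : (kk φ Γ ((k * k') • s))⁻¹ * (k * k') * kk φ Γ s =
        ((kk φ Γ (k • (k' • s)))⁻¹ * k * kk φ Γ (k' • s)) *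
        ((kk φ Γ (k' • s))⁻¹ * k' * kk φ Γ s) := by
      rw [mul_smul]
      group
    rw [key]
    exact Subgroup.mul_mem _ (ih _) (ih' _)
  | inv k ih =>
    intro s
    have key : (kk φ Γ (k⁻¹ • s))⁻¹ * k⁻¹ * kk φ Γ s =
        ((kk φ Γ (k • (k⁻¹ • s)))⁻¹ * k * kk φ Γ (k⁻¹ • s))⁻¹ := by
      rw [smul_inv_smul]
      group
    rw [key]
    exact Subgroup.inv_mem _ (ih _)

lemma C_eq_Γ : Cgrp φ Γ = Γ := by
  apply le_antisymm
  · rw [Cgrp, Subgroup.closure_le]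
    rintro x ⟨p, _, rfl⟩
    exact γmap_mem φ Γ _
  · intro γ hγ
    have h1 : γ • bp φ Γ = bp φ Γ := (mem_iff_smul_bp φ Γ γ).2 hγ
    have := schreier φ Γ hφ htf γ (bp φ Γ)
    rw [h1, kk_bp φ Γ htf] at this
    simpa using this

end generation

section wreath
set_option linter.unusedSectionVars false
variable [NeZero n]
variable {X : Type} [Group X]

/-- permutation action on functions, as `MulAut` -/
def permHom (α : Type*) (X : Type*) [Group X] : Equiv.Perm α →* MulAut (α → X) where
  toFun σ :=
    { toFun := fun u => u ∘ σ.symm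
      invFun := fun u => u ∘ σ
      left_inv := fun u => by ext x; simp
      right_inv := fun u => by ext x; simp
      map_mul' := fun u v => rfl }
  map_one' := by ext u x; rfl
  map_mul' := fun σ τ => by ext u x; rfl

abbrev W (X : Type) [Group X] := (S φ Γ → X) ⋊[permHom (S φ Γ) X] Equiv.Perm (S φ Γ)

noncomputable def π : K φ →* Equiv.Perm (S φ Γ) := MulAction.toPermHom (K φ) (S φ Γ)

lemma π_apply (k : K φ) (s : S φ Γ) : (π φ Γ k) s = k • s := rfl

lemma π_symm_apply (k : K φ) (s : S φ Γ) : (π φ Γ k).symm s = k⁻¹ • s := by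
  rw [Equiv.symm_apply_eq, π_apply, smul_inv_smul]

noncomputable def ρW (X : Type) [Group X] : DihedralGroup n →* W φ Γ X :=
  (SemidirectProduct.inr).comp ((π φ Γ).comp HNNExtension.of)

variable (f : P φ Γ → X)

open Classical in
noncomputable def hmap : S φ Γ → X := fun x =>
  if h : pr φ Γ x ∈ Eset φ Γ then f (pr φ Γ x) else 1

lemma hmap_ab (x : S φ Γ) : hmap φ Γ f ((of ab : K φ) • x) = hmap φ Γ f x := by
  rw [hmap, hmap, pr_ab_smul]

lemma hmap_tgt {o : O φ Γ} (h : o ≠ root φ Γ) : hmap φ Γ f (tgt φ Γ o) = 1 := by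
  rw [hmap]
  have : ¬ (pr φ Γ (tgt φ Γ o) ∈ Eset φ Γ) := by
    intro hmem
    exact hmem o h rfl
  rw [dif_neg this]

noncomputable def τW : W φ Γ X := ⟨hmap φ Γ f, π φ Γ (t : K φ)⟩

variable (hφ : (φ ⟨DihedralGroup.sr 0, Subgroup.subset_closure (Set.mem_singleton _)⟩ :
        DihedralGroup n) = DihedralGroup.r 1 * DihedralGroup.sr 0)
include hφ

lemma lift_cond : ∀ a : (Subgroup.closure {bb} : Subgroup (DihedralGroup n)),
    τW φ Γ f * ρW φ Γ X ((a : DihedralGroup n)) =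
      ρW φ Γ X ((φ a : DihedralGroup n)) * τW φ Γ f := by
  rintro ⟨a, ha⟩
  rcases mem_closure_bb a ha with rfl | rfl
  · have h1 : (⟨1, ha⟩ : (Subgroup.closure {bb} : Subgroup (DihedralGroup n))) = 1 := rfl
    rw [h1, map_one]
    simp only [OneMemClass.coe_one, map_one, mul_one, one_mul]
  · have h1 : (⟨bb, ha⟩ : (Subgroup.closure {bb} : Subgroup (DihedralGroup n))) =
        ⟨DihedralGroup.sr 0, Subgroup.subset_closure (Set.mem_singleton _)⟩ := rfl
    rw [h1, hφ]
    apply SemidirectProduct.ext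
    · show hmap φ Γ f * (permHom (S φ Γ) X (π φ Γ (t : K φ))) 1 =
        1 * (permHom (S φ Γ) X (π φ Γ (of ab : K φ))) (hmap φ Γ f)
      rw [map_one, one_mul, mul_one]
      ext x
      show hmap φ Γ f x = hmap φ Γ f ((π φ Γ (of ab : K φ)).symm x)
      rw [π_symm_apply]
      have : ((of ab : K φ))⁻¹ = of ab := by
        rw [← map_inv, ab_inv]
      rw [this, hmap_ab]
    · show π φ Γ (t : K φ) * π φ Γ (of bb : K φ) = π φ Γ (of ab : K φ) * π φ Γ (t : K φ)
      rw [← map_mul, ← map_mul, t_mul_of_bb φ hφ]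

noncomputable def Φ : K φ →* W φ Γ X :=
  HNNExtension.lift (ρW φ Γ X) (τW φ Γ f) (lift_cond φ Γ f hφ)

lemma Φ_of (g : DihedralGroup n) : Φ φ Γ f hφ (of g) = ρW φ Γ X g :=
  HNNExtension.lift_of _ _ _ g

lemma Φ_t : Φ φ Γ f hφ (t : K φ) = τW φ Γ f :=
  HNNExtension.lift_t _ _ _

lemma Φ_right (k : K φ) : (Φ φ Γ f hφ k).right = π φ Γ k := by
  have : (SemidirectProduct.rightHom.comp (Φ φ Γ f hφ)) = π φ Γ := by
    apply HNNExtension.hom_ext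
    · refine MonoidHom.ext fun g => ?_
      show (Φ φ Γ f hφ (of g)).right = π φ Γ (of g)
      rw [Φ_of]
      rfl
    · show (Φ φ Γ f hφ (t : K φ)).right = π φ Γ (t : K φ)
      rw [Φ_t]
      rfl
  exact DFunLike.congr_fun this k

lemma Φ_mul_left (k k' : K φ) (s : S φ Γ) :
    (Φ φ Γ f hφ (k * k')).left s =
      (Φ φ Γ f hφ k).left s * (Φ φ Γ f hφ k').left (k⁻¹ • s) := by
  rw [map_mul, SemidirectProduct.mul_left]
  show _ * (permHom (S φ Γ) X (Φ φ Γ f hφ k).right (Φ φ Γ f hφ k').left) s = _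
  congr 1
  show (Φ φ Γ f hφ k').left ((Φ φ Γ f hφ k).right.symm s) = _
  rw [Φ_right, π_symm_apply]

end wreath

section evaluation
set_option linter.unusedSectionVars false
variable [NeZero n]
variable {X : Type} [Group X] (f : P φ Γ → X)
variable (hφ : (φ ⟨DihedralGroup.sr 0, Subgroup.subset_closure (Set.mem_singleton _)⟩ :
        DihedralGroup n) = DihedralGroup.r 1 * DihedralGroup.sr 0)
variable (htf : Monoid.IsTorsionFree Γ)

lemma Φ_of_left (g : DihedralGroup n) (s : S φ Γ) :
    (Φ φ Γ f hφ (of g)).left s = 1 := by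
  rw [Φ_of]
  rfl

lemma Φ_t_left (s : S φ Γ) : (Φ φ Γ f hφ (t : K φ)).left s = hmap φ Γ f s := by
  rw [Φ_t]
  rfl

lemma Φ_inv_left (k : K φ) (s : S φ Γ) :
    (Φ φ Γ f hφ k⁻¹).left s = ((Φ φ Γ f hφ k).left (k • s))⁻¹ := by
  rw [map_inv]
  show (permHom (S φ Γ) X ((Φ φ Γ f hφ k).right)⁻¹) ((Φ φ Γ f hφ k).left)⁻¹ s = _
  show ((Φ φ Γ f hφ k).left)⁻¹ ((((Φ φ Γ f hφ k).right)⁻¹).symm s) = _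
  rw [Φ_right]
  have : (((π φ Γ k)⁻¹).symm) s = k • s := by
    rw [← map_inv, π_symm_apply, inv_inv]
  rw [this]
  rfl

lemma CL1_of (s : S φ Γ)
    (hrep : (Φ φ Γ f hφ (κ φ Γ (orb φ Γ s))).left (rep φ Γ (orb φ Γ s)) = 1) :
    (Φ φ Γ f hφ (kk φ Γ s)).left s = 1 := by
  rw [kk, Φ_mul_left, Φ_of_left, one_mul]
  have : (of (gElt φ Γ s) : K φ)⁻¹ • s = rep φ Γ (orb φ Γ s) := by
    rw [inv_smul_eq_iff]
    exact (gElt_spec φ Γ s).symm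
  rw [this, hrep]

include htf in
lemma CL_rep : ∀ m (o : O φ Γ), depth φ Γ o ≤ m →
    (Φ φ Γ f hφ (κ φ Γ o)).left (rep φ Γ o) = 1 := by
  intro m
  induction m with
  | zero =>
    intro o ho
    have h := eq_root_of_depth_zero φ Γ (Nat.le_zero.1 ho)
    subst h
    rw [(rep_root φ Γ).2, map_one]
    rfl
  | succ m ih =>
    intro o ho
    by_cases h : o = root φ Γ
    · subst h
      rw [(rep_root φ Γ).2, map_one]
      rfl
    · have hd := depth_esrc φ Γ h
      have hesrc : (Φ φ Γ f hφ (kk φ Γ (esrc φ Γ o))).left (esrc φ Γ o) = 1 :=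
        CL1_of φ Γ f hφ _ (ih (orb φ Γ (esrc φ Γ o)) (by omega))
      by_cases hA : caseA φ Γ o
      · have hst := (struct_eq φ Γ htf h).1 hA
        rw [hst.2, Φ_mul_left, Φ_t_left]
        have h1 : (t : K φ)⁻¹ • rep φ Γ o = esrc φ Γ o := by
          rw [hst.1, inv_smul_smul]
        rw [h1, hesrc, mul_one]
        have h2 : rep φ Γ o = tgt φ Γ o := by
          rw [tgt, if_pos hA, hst.1]
        rw [h2, hmap_tgt φ Γ f h]
      · have hst := (struct_eq φ Γ htf h).2 hA
        rw [hst.2, Φ_mul_left, Φ_inv_left, Φ_t_left]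
        have h1 : (t : K φ) • rep φ Γ o = esrc φ Γ o := by
          rw [hst.1, smul_inv_smul]
        have h1' : ((t : K φ)⁻¹)⁻¹ • rep φ Γ o = esrc φ Γ o := by
          rw [inv_inv]
          exact h1
        rw [h1, h1', hesrc, mul_one]
        have h2 : esrc φ Γ o = tgt φ Γ o := by
          rw [tgt, if_neg hA]
        rw [h2, hmap_tgt φ Γ f h]
        simp

include htf in
lemma CL1 (s : S φ Γ) : (Φ φ Γ f hφ (kk φ Γ s)).left s = 1 :=
  CL1_of φ Γ f hφ s (CL_rep φ Γ f hφ htf (depth φ Γ (orb φ Γ s)) (orb φ Γ s) le_rfl)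

noncomputable def ψ : Γ →* X where
  toFun γ := (Φ φ Γ f hφ (γ : K φ)).left (bp φ Γ)
  map_one' := by
    show (Φ φ Γ f hφ ((1 : Γ) : K φ)).left (bp φ Γ) = 1
    rw [OneMemClass.coe_one, map_one]
    rfl
  map_mul' γ γ' := by
    show (Φ φ Γ f hφ ((γ * γ' : Γ) : K φ)).left (bp φ Γ) = _ * _
    rw [Subgroup.coe_mul, Φ_mul_left]
    have : ((γ : K φ))⁻¹ ∈ Γ := Subgroup.inv_mem _ γ.2
    rw [(mem_iff_smul_bp φ Γ _).2 this]

include htf in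
lemma ψ_γgen (p : P φ Γ) (hp : p ∈ Eset φ Γ) :
    ψ φ Γ f hφ ⟨γgen φ Γ p, γmap_mem φ Γ _⟩ = f p := by
  show (Φ φ Γ f hφ (γgen φ Γ p)).left (bp φ Γ) = f p
  have hx : (t : K φ) • ((t : K φ)⁻¹ • prep φ Γ p) = prep φ Γ p := smul_inv_smul _ _
  have hexp : γgen φ Γ p = (kk φ Γ (prep φ Γ p))⁻¹ *
      ((t : K φ) * kk φ Γ ((t : K φ)⁻¹ • prep φ Γ p)) := by
    rw [γgen, γmap, hx, mul_assoc]
  rw [hexp, Φ_mul_left, Φ_inv_left]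
  rw [kk_smul_bp]
  rw [CL1 φ Γ f hφ htf, inv_one, one_mul]
  have h1 : ((kk φ Γ (prep φ Γ p))⁻¹)⁻¹ • bp φ Γ = prep φ Γ p := by
    rw [inv_inv, kk_smul_bp]
  rw [h1, Φ_mul_left, Φ_t_left, CL1 φ Γ f hφ htf, mul_one]
  rw [hmap]
  rw [pr_prep]
  rw [dif_pos hp]

end evaluation

section iso
set_option linter.unusedSectionVars false
variable [NeZero n]
variable (hφ : (φ ⟨DihedralGroup.sr 0, Subgroup.subset_closure (Set.mem_singleton _)⟩ :
        DihedralGroup n) = DihedralGroup.r 1 * DihedralGroup.sr 0)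
variable (htf : Monoid.IsTorsionFree Γ)

noncomputable def ι : Eset φ Γ → Γ := fun p => ⟨γgen φ Γ p.1, γmap_mem φ Γ _⟩

noncomputable def Θ : FreeGroup (Eset φ Γ) →* Γ := FreeGroup.lift (ι φ Γ)

include hφ htf in
lemma Θ_surj : Function.Surjective (Θ φ Γ) := by
  intro γ
  have hγ : (γ : K φ) ∈ Cgrp φ Γ := by
    rw [C_eq_Γ φ Γ hφ htf]
    exact γ.2
  have key : ∀ x, x ∈ Cgrp φ Γ → ∃ w : FreeGroup (Eset φ Γ), ((Θ φ Γ w : Γ) : K φ) = x := by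
    intro x hγ
    induction hγ using Subgroup.closure_induction with
    | mem x hx =>
      obtain ⟨p, hp, rfl⟩ := hx
      refine ⟨FreeGroup.of ⟨p, hp⟩, ?_⟩
      show ((FreeGroup.lift (ι φ Γ)) (FreeGroup.of ⟨p, hp⟩) : K φ) = _
      rw [FreeGroup.lift_apply_of]
      rfl
    | one => exact ⟨1, by simp⟩
    | mul x y hx hy ihx ihy =>
      obtain ⟨w₁, hw₁⟩ := ihx
      obtain ⟨w₂, hw₂⟩ := ihy
      exact ⟨w₁ * w₂, by rw [map_mul, Subgroup.coe_mul, hw₁, hw₂]⟩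
    | inv x hx ihx =>
      obtain ⟨w, hw⟩ := ihx
      exact ⟨w⁻¹, by rw [map_inv, Subgroup.coe_inv, hw]⟩
  obtain ⟨w, hw⟩ := key _ hγ
  exact ⟨w, Subtype.ext hw⟩

open Classical in
noncomputable def f₀ : P φ Γ → FreeGroup (Eset φ Γ) := fun p =>
  if hp : p ∈ Eset φ Γ then FreeGroup.of (⟨p, hp⟩ : Eset φ Γ) else 1

include hφ htf in
lemma ψ_Θ : (ψ φ Γ (f₀ φ Γ) hφ).comp (Θ φ Γ) = MonoidHom.id _ := by
  apply FreeGroup.ext_hom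
  intro e
  show ψ φ Γ (f₀ φ Γ) hφ (Θ φ Γ (FreeGroup.of e)) = FreeGroup.of e
  have h1 : Θ φ Γ (FreeGroup.of e) = ι φ Γ e := FreeGroup.lift_apply_of
  rw [h1]
  have h2 : ι φ Γ e = ⟨γgen φ Γ e.1, γmap_mem φ Γ _⟩ := rfl
  rw [h2, ψ_γgen φ Γ (f₀ φ Γ) hφ htf e.1 e.2]
  rw [f₀, dif_pos e.2]

include hφ htf in
lemma Θ_inj : Function.Injective (Θ φ Γ) := by
  have h := ψ_Θ φ Γ hφ htf
  intro w w' hw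
  have := congrArg (ψ φ Γ (f₀ φ Γ) hφ) hw
  have h1 : ∀ w, ψ φ Γ (f₀ φ Γ) hφ (Θ φ Γ w) = w := fun w => DFunLike.congr_fun h w
  rwa [h1, h1] at this

include hφ htf in
lemma Γ_iso : Nonempty (Γ ≃* FreeGroup (Eset φ Γ)) :=
  ⟨(MulEquiv.ofBijective (Θ φ Γ) ⟨Θ_inj φ Γ hφ htf, Θ_surj φ Γ hφ htf⟩).symm⟩

end iso

section counting
set_option linter.unusedSectionVars false
variable [NeZero n]
variable (htf : Monoid.IsTorsionFree Γ)

lemma ab_ne_one : (ab : DihedralGroup n) ≠ 1 := by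
  simp [DihedralGroup.r_mul_sr, DihedralGroup.one_def, -DihedralGroup.r_zero]

include htf in
lemma equiv1 : Nonempty (DihedralGroup n × O φ Γ ≃ S φ Γ) := by
  refine ⟨⟨fun go => (of go.1 : K φ) • rep φ Γ go.2, fun s => (gElt φ Γ s, orb φ Γ s),
    ?_, ?_⟩⟩
  · rintro ⟨g, o⟩
    have ho : orb φ Γ ((of g : K φ) • rep φ Γ o) = o := by
      rw [orb_of_smul, orb_rep]
    refine Prod.ext ?_ ho
    show gElt φ Γ ((of g : K φ) • rep φ Γ o) = g
    apply gElt_eq φ Γ htf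
    rw [ho]
  · intro s
    exact gElt_spec φ Γ s

include htf in
lemma card_S_orb : Nat.card (S φ Γ) = 2 * n * Nat.card (O φ Γ) := by
  obtain ⟨e⟩ := equiv1 φ Γ htf
  rw [← Nat.card_congr e, Nat.card_prod, DihedralGroup.nat_card]

include htf in
lemma pair_cases (s : S φ Γ) :
    s = prep φ Γ (pr φ Γ s) ∨ s = (of ab : K φ) • prep φ Γ (pr φ Γ s) := by
  have := (pr_eq_iff φ Γ).1 (pr_prep φ Γ (pr φ Γ s))
  exact this

include htf in
lemma equiv2 : Nonempty (Bool × P φ Γ ≃ S φ Γ) := by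
  classical
  have hfree : ∀ x : S φ Γ, (of ab : K φ) • x ≠ x :=
    fun x => free_action φ Γ htf _ (ab_ne_one) x
  refine ⟨⟨fun bp' => if bp'.1 then (of ab : K φ) • prep φ Γ bp'.2 else prep φ Γ bp'.2,
    fun s => if s = prep φ Γ (pr φ Γ s) then (false, pr φ Γ s) else (true, pr φ Γ s),
    ?_, ?_⟩⟩
  · rintro ⟨b, p⟩
    cases b
    · simp only [Bool.false_eq_true, if_false]
      rw [if_pos]
      · rw [pr_prep]
      · rw [pr_prep]
    · simp only [if_true]
      rw [if_neg]
      · rw [pr_ab_smul, pr_prep]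
      · rw [pr_ab_smul, pr_prep]
        exact hfree _
  · intro s
    by_cases hs : s = prep φ Γ (pr φ Γ s)
    · show (if (if s = prep φ Γ (pr φ Γ s) then ((false : Bool), pr φ Γ s)
          else (true, pr φ Γ s)).1 = true then _ else _) = s
      simp only [if_pos hs]
      simp only [Bool.false_eq_true, if_false]
      exact hs.symm
    · show (if (if s = prep φ Γ (pr φ Γ s) then ((false : Bool), pr φ Γ s)
          else (true, pr φ Γ s)).1 = true then _ else _) = s
      simp only [if_neg hs]
      simp only [if_true]
      exact ((pair_cases φ Γ htf s).resolve_left hs).symm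

include htf in
lemma card_S_pair : Nat.card (S φ Γ) = 2 * Nat.card (P φ Γ) := by
  obtain ⟨e⟩ := equiv2 φ Γ htf
  rw [← Nat.card_congr e, Nat.card_prod, Nat.card_eq_fintype_card (α := Bool)]
  norm_num

variable (hφ : (φ ⟨DihedralGroup.sr 0, Subgroup.subset_closure (Set.mem_singleton _)⟩ :
        DihedralGroup n) = DihedralGroup.r 1 * DihedralGroup.sr 0)

include htf hφ in
lemma equiv3 : Nonempty ({o : O φ Γ // o ≠ root φ Γ} ≃ {p : P φ Γ // p ∉ Eset φ Γ}) := by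
  refine ⟨Equiv.ofBijective
    (fun o => ⟨tp φ Γ o.1, fun hE => hE o.1 o.2 rfl⟩) ⟨?_, ?_⟩⟩
  · rintro ⟨o₁, h₁⟩ ⟨o₂, h₂⟩ h
    have := tp_inj φ Γ hφ htf h₁ h₂ (congrArg Subtype.val h)
    exact Subtype.ext this
  · rintro ⟨p, hp⟩
    rw [Eset, Set.mem_setOf_eq, not_forall] at hp
    obtain ⟨o, ho⟩ := hp
    rw [_root_.not_imp, not_not] at ho
    exact ⟨⟨o, ho.1⟩, Subtype.ext ho.2⟩

end counting

section final
set_option linter.unusedSectionVars false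
variable [NeZero n]
variable (hφ : (φ ⟨DihedralGroup.sr 0, Subgroup.subset_closure (Set.mem_singleton _)⟩ :
        DihedralGroup n) = DihedralGroup.r 1 * DihedralGroup.sr 0)
variable (htf : Monoid.IsTorsionFree Γ)

include hφ htf in
theorem main (hn : 2 ≤ n) (d : ℕ) (hd : Γ.index = d) (hd0 : 0 < d) :
    ∃ g : ℕ, Nonempty (Γ ≃* FreeGroup (Fin g)) ∧
      2 * n ∣ d * (n - 1) ∧ g = 1 + d * (n - 1) / (2 * n) := by
  classical
  have hcardS : Nat.card (S φ Γ) = d := hd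
  haveI hfinS : Finite (S φ Γ) := by
    have : Nat.card (S φ Γ) ≠ 0 := by omega
    exact (Nat.card_ne_zero.1 this).2
  haveI hfinO : Finite (O φ Γ) := Quotient.finite _
  haveI hfinP : Finite (P φ Γ) := Quotient.finite _
  haveI : Fintype (O φ Γ) := Fintype.ofFinite _
  haveI : Fintype (P φ Γ) := Fintype.ofFinite _
  set q := Nat.card (O φ Γ) with hq
  set cP := Nat.card (P φ Γ) with hcP
  have hOq : d = 2 * n * q := by rw [← hcardS, card_S_orb φ Γ htf]
  have hPq : d = 2 * cP := by rw [← hcardS, card_S_pair φ Γ htf]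
  have hqpos : 0 < q := by
    have : Nonempty (O φ Γ) := ⟨root φ Γ⟩
    rw [hq]
    exact Nat.card_pos
  -- card of non-root orbits
  have hcard_ne : Nat.card {o : O φ Γ // o ≠ root φ Γ} = q - 1 := by
    rw [Nat.card_eq_fintype_card, Fintype.card_subtype_compl, hq, Nat.card_eq_fintype_card,
      Fintype.card_subtype_eq]
  have hcard_compl : Nat.card {p : P φ Γ // p ∉ Eset φ Γ} = q - 1 := by
    obtain ⟨e⟩ := equiv3 φ Γ htf hφ
    rw [← Nat.card_congr e, hcard_ne]
  have hcard_split : Nat.card {p : P φ Γ // p ∈ Eset φ Γ} +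
      Nat.card {p : P φ Γ // p ∉ Eset φ Γ} = cP := by
    rw [Nat.card_eq_fintype_card, Nat.card_eq_fintype_card, Fintype.card_subtype_compl,
      hcP, Nat.card_eq_fintype_card]
    have hle : Fintype.card {p : P φ Γ // p ∈ Eset φ Γ} ≤ Fintype.card (P φ Γ) :=
      Fintype.card_subtype_le _
    omega
  set cE := Nat.card {p : P φ Γ // p ∈ Eset φ Γ} with hcE
  obtain ⟨m, rfl⟩ : ∃ m, n = m + 2 := ⟨n - 2, by omega⟩
  have hdvd : 2 * (m + 2) ∣ d * (m + 2 - 1) := by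
    refine Dvd.dvd.mul_right ⟨q, ?_⟩ _
    rw [hOq]
  have harith : cE = 1 + d * (m + 2 - 1) / (2 * (m + 2)) := by
    have hsub : m + 2 - 1 = m + 1 := rfl
    have h1 : d * (m + 2 - 1) = 2 * (m + 2) * (q * (m + 1)) := by
      rw [hsub, hOq]
      ring
    rw [h1, Nat.mul_div_cancel_left _ (by omega : 0 < 2 * (m + 2))]
    have h2 : cE + (q - 1) = cP := by rw [hcE, ← hcard_compl, hcard_split]
    obtain ⟨R, hR⟩ : ∃ R, (m + 2) * q = R := ⟨_, rfl⟩
    obtain ⟨Q1, hQ1⟩ : ∃ Q1, q * (m + 1) = Q1 := ⟨_, rfl⟩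
    have h5 : Q1 + q = R := by rw [← hR, ← hQ1]; ring
    have h6 : d = 2 * R := by rw [hOq, ← hR]; ring
    rw [hQ1]
    omega
  refine ⟨cE, ?_, hdvd, harith⟩
  obtain ⟨eΓ⟩ := Γ_iso φ Γ hφ htf
  have hfin : Fintype.card {p : P φ Γ // p ∈ Eset φ Γ} = cE := by
    rw [hcE, Nat.card_eq_fintype_card]
  exact ⟨eΓ.trans (FreeGroup.freeGroupCongr (Fintype.equivFinOfCardEq hfin))⟩

end final
end HnnDih

/-- Let `K` be the HNN extension of `Dₙ` (`n ≥ 2`) along the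
isomorphism `⟨B⟩ → ⟨AB⟩`, `B ↦ AB`, with stable letter `T`. If `Γ ≤ K` is a
torsion-free subgroup of finite index `d`, then `Γ` is free of rank
`1 + d(n−1)/(2n)`; in particular `2n` divides `d(n−1)`. -/
theorem hnn_dihedral_torsionfree_subgroup_free (n : ℕ) (hn : 2 ≤ n)
    (φ : (Subgroup.closure {DihedralGroup.sr 0} : Subgroup (DihedralGroup n)) ≃*
      (Subgroup.closure {DihedralGroup.r 1 * DihedralGroup.sr 0} : Subgroup (DihedralGroup n)))
    (hφ : (φ ⟨DihedralGroup.sr 0, Subgroup.subset_closure (Set.mem_singleton _)⟩ :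
        DihedralGroup n) = DihedralGroup.r 1 * DihedralGroup.sr 0)
    (Γ : Subgroup (HNNExtension (DihedralGroup n) _ _ φ))
    (d : ℕ) (hd : Γ.index = d) (hd0 : 0 < d)
    (htf : Monoid.IsTorsionFree Γ) :
    ∃ g : ℕ, Nonempty (Γ ≃* FreeGroup (Fin g)) ∧
      2 * n ∣ d * (n - 1) ∧ g = 1 + d * (n - 1) / (2 * n) := by
  haveI : NeZero n := ⟨by omega⟩
  exact HnnDih.main φ Γ hφ htf hn d hd hd0
end

section
/- In the HNN extension K of D_n = ⟨A, B⟩ by the stable letter T with T B T⁻¹ = A B (n ≥ 3 odd), the subgroup Γ generated by the n conjugates Aᵏ C A⁻ᵏ (k = 0, 1, …, n−1), where C = A^{(n−1)/2} T, is a normal subgroup of index 2n in K, and Γ is a free group of rank n. -/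
/-!
`K` is isomorphic to `F(ℤ/n) ⋊ Dₙ`, where `Dₙ` permutes the free basis `(x_k)` through its action
`r i : k ↦ k - i`, `sr i : k ↦ i - k` on `ℤ/n`: send `Dₙ` to itself and `T` to `x_m A⁻ᵐ`, where
`2m + 1 = 0` in `ℤ/n` (this is where `n` odd is used). Conversely `x_k ↦ A⁻ᵏ C Aᵏ` is compatible
with the action because `A` shifts these conjugates and `B C B = C`. Under this isomorphism `Γ`
is the free normal factor `F(ℤ/n)`, whose quotient is `Dₙ`, of order `2n`.
-/

open DihedralGroup HNNExtension SemidirectProduct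

theorem Subgroup.eq_one_or_eq_of_mem_closure_singleton {G : Type*} [Group G] {g x : G}
    (hg : g * g = 1) (hx : x ∈ Subgroup.closure {g}) : x = 1 ∨ x = g := by
  obtain ⟨k, rfl⟩ := Subgroup.mem_closure_singleton.1 hx
  have hg2 : g ^ (2 : ℤ) = 1 := by rw [zpow_two, hg]
  rw [← Int.emod_add_mul_ediv k 2, zpow_add, zpow_mul, hg2, one_zpow, mul_one]
  rcases Int.emod_two_eq_zero_or_one k with h | h <;> simp [h]

theorem ZMod.natCast_half_pred_add_self_add_one {n : ℕ} (hn : Odd n) :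
    (((n - 1) / 2 : ℕ) : ZMod n) + ((n - 1) / 2 : ℕ) + 1 = 0 := by
  obtain ⟨k, rfl⟩ := hn
  rw [show (2 * k + 1 - 1) / 2 = k by omega]
  simpa [two_mul, add_assoc] using ZMod.natCast_self (2 * k + 1)

def FreeGroup.permHom (X : Type*) : Equiv.Perm X →* MulAut (FreeGroup X) where
  toFun := FreeGroup.freeGroupCongr
  map_one' := FreeGroup.freeGroupCongr_refl
  map_mul' e f := (FreeGroup.freeGroupCongr_trans f e).symm

@[simp] theorem FreeGroup.permHom_apply_of {X : Type*} (e : Equiv.Perm X) (x : X) :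
    FreeGroup.permHom X e (FreeGroup.of x) = FreeGroup.of (e x) := rfl

def DihedralGroup.toPermZMod (n : ℕ) : DihedralGroup n →* Equiv.Perm (ZMod n) where
  toFun
    | .r i => Equiv.subRight i
    | .sr i => Equiv.subLeft i
  map_one' := Equiv.ext fun k => sub_zero k
  map_mul' d e := by
    rcases d with i | i <;> rcases e with j | j <;>
      refine Equiv.ext fun k => ?_ <;>
      simp only [r_mul_r, r_mul_sr, sr_mul_r, sr_mul_sr, Equiv.Perm.mul_apply,
        Equiv.subRight_apply, Equiv.subLeft_apply] <;> ring

@[simp] theorem DihedralGroup.toPermZMod_r {n : ℕ} (i k : ZMod n) :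
    toPermZMod n (r i) k = k - i := rfl

@[simp] theorem DihedralGroup.toPermZMod_sr {n : ℕ} (i k : ZMod n) :
    toPermZMod n (sr i) k = i - k := rfl

theorem SemidirectProduct.normal_index_mulEquiv_of_map_eq_range_inl
    {K N G : Type*} [Group K] [Group N] [Group G] {ψ : G →* MulAut N}
    (e : K ≃* N ⋊[ψ] G) {Γ : Subgroup K} (hΓ : Γ.map e.toMonoidHom = inl.range) :
    Γ.Normal ∧ Γ.index = Nat.card G ∧ Nonempty (Γ ≃* N) := by
  have hker : Γ = (rightHom.comp e.toMonoidHom).ker := by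
    rw [← MonoidHom.comap_ker, ← range_inl_eq_ker_rightHom, ← hΓ,
      Subgroup.comap_map_eq_self_of_injective e.injective]
  have hsurj : Function.Surjective (rightHom.comp e.toMonoidHom) :=
    rightHom_surjective.comp e.surjective
  refine ⟨hker ▸ MonoidHom.normal_ker _, ?_, ⟨?_⟩⟩
  · rw [hker, Subgroup.index_ker, MonoidHom.range_eq_top.2 hsurj, Subgroup.card_top]
  · exact (e.subgroupMap Γ).trans ((MulEquiv.subgroupCongr hΓ).trans
      (MonoidHom.ofInjective inl_injective).symm)

namespace DihedralHNN

abbrev FreeByDihedral (n : ℕ) :=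
  FreeGroup (ZMod n) ⋊[(FreeGroup.permHom (ZMod n)).comp (toPermZMod n)] DihedralGroup n

variable {n : ℕ}
  (φ : (Subgroup.closure {sr 0} : Subgroup (DihedralGroup n)) ≃*
    (Subgroup.closure {r 1 * sr 0} : Subgroup (DihedralGroup n)))
  (hφ : (φ ⟨sr 0, Subgroup.subset_closure (Set.mem_singleton _)⟩ : DihedralGroup n) = r 1 * sr 0)
  {m : ZMod n} (hm : m + m + 1 = 0)

def schottkyGen (m k : ZMod n) : HNNExtension (DihedralGroup n) _ _ φ :=
  of (r (-k)) * (of (r m) * t) * of (r k)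

include hφ in
theorem t_mul_of_sr_zero :
    (t : HNNExtension (DihedralGroup n) _ _ φ) * of (sr 0) = of (sr (-1)) * t := by
  rw [t_mul_of (φ := φ) ⟨sr 0, Subgroup.subset_closure (Set.mem_singleton _)⟩, hφ]
  simp only [r_mul_sr, zero_sub]

include hφ hm in
theorem of_sr_zero_mul_mul_of_sr_zero :
    of (sr 0) * (of (r m) * t) * of (sr 0) = (of (r m) * t : HNNExtension _ _ _ φ) :=
  calc _ = of (sr 0 * r m) * (t * of (sr 0)) := by simp only [map_mul, mul_assoc]
    _ = of (sr m * sr (-1)) * t := by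
      rw [t_mul_of_sr_zero φ hφ, ← mul_assoc, ← map_mul, sr_mul_r, zero_add, map_mul]
    _ = of (r m) * t := by rw [sr_mul_sr, show -1 - m = m by linear_combination -hm]

include hφ hm in
theorem of_sr_mul_mul_of_sr (j : ZMod n) :
    of (sr j) * (of (r m) * t) * of (sr j) = schottkyGen φ m j :=
  calc _ = of (r (-j) * sr 0) * (of (r m) * t) * of (sr 0 * r j) := by
        simp only [r_mul_sr, sr_mul_r, zero_sub, neg_neg, zero_add]
    _ = of (r (-j)) * (of (sr 0) * (of (r m) * t) * of (sr 0)) * of (r j) := by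
        simp only [map_mul, mul_assoc]
    _ = schottkyGen φ m j := by rw [of_sr_zero_mul_mul_of_sr_zero φ hφ hm, schottkyGen]

include hφ hm in
theorem of_mul_schottkyGen_mul_inv (d : DihedralGroup n) (k : ZMod n) :
    of d * schottkyGen φ m k * (of d)⁻¹ = schottkyGen φ m (toPermZMod n d k) := by
  have hconj : of d * schottkyGen φ m k * (of d)⁻¹ =
      of (d * r (-k)) * (of (r m) * t) * of (r k * d⁻¹) := by
    simp only [schottkyGen, map_mul, map_inv, mul_assoc]
  rw [hconj]
  rcases d with i | i
  · simp only [inv_r, r_mul_r, toPermZMod_r, schottkyGen]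
    congr 4 <;> ring
  · simp only [inv_sr, sr_mul_r, r_mul_sr, toPermZMod_sr, ← sub_eq_add_neg]
    exact of_sr_mul_mul_of_sr φ hφ hm (i - k)

theorem of_r_one_pow_conj (k c : ℕ) :
    (of (r 1) : HNNExtension (DihedralGroup n) _ _ φ) ^ k * ((of (r 1)) ^ c * t) *
      ((of (r 1)) ^ k)⁻¹ = schottkyGen φ c (-k) := by
  simp only [← map_pow, r_one_pow, ← map_inv, inv_r, schottkyGen, neg_neg]

theorem setOf_conj_eq_range_schottkyGen [NeZero n] (c : ℕ) :
    {x : HNNExtension (DihedralGroup n) _ _ φ | ∃ k : ℕ, k < n ∧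
      x = (of (r 1)) ^ k * ((of (r 1)) ^ c * t) * ((of (r 1)) ^ k)⁻¹} =
      Set.range (schottkyGen φ c) := by
  ext x
  simp only [of_r_one_pow_conj, Set.mem_ofPred_eq, Set.mem_range]
  constructor
  · rintro ⟨k, -, rfl⟩
    exact ⟨_, rfl⟩
  · rintro ⟨j, rfl⟩
    exact ⟨(-j).val, ZMod.val_lt _, by rw [ZMod.natCast_zmod_val, neg_neg]⟩

def stableImage (m : ZMod n) : FreeByDihedral n := inl (FreeGroup.of m) * inr (r (-m))

include hφ hm in
theorem stableImage_mul_inr (a : Subgroup.closure {sr 0}) :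
    stableImage m * inr (a : DihedralGroup n) = inr (φ a : DihedralGroup n) * stableImage m := by
  rcases Subgroup.eq_one_or_eq_of_mem_closure_singleton (sr_mul_self 0) a.2 with ha | ha
  · obtain rfl : a = 1 := Subtype.ext ha
    rw [map_one φ]
    simp
  · obtain rfl : a = ⟨sr 0, Subgroup.subset_closure (Set.mem_singleton _)⟩ := Subtype.ext ha
    rw [hφ, r_mul_sr, zero_sub]
    have hm' : m = -1 - m := by linear_combination hm
    ext
    · simpa [stableImage] using congrArg FreeGroup.of hm'
    · simpa [stableImage, sub_eq_add_neg] using hm'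

def toFreeByDihedral : HNNExtension (DihedralGroup n) _ _ φ →* FreeByDihedral n :=
  HNNExtension.lift inr (stableImage m) (stableImage_mul_inr φ hφ hm)

@[simp] theorem toFreeByDihedral_of (d : DihedralGroup n) :
    toFreeByDihedral φ hφ hm (of d) = inr d :=
  HNNExtension.lift_of _ _ _ _

@[simp] theorem toFreeByDihedral_t : toFreeByDihedral φ hφ hm t = stableImage m :=
  HNNExtension.lift_t _ _ _

theorem toFreeByDihedral_schottkyGen (k : ZMod n) :
    toFreeByDihedral φ hφ hm (schottkyGen φ m k) = inl (FreeGroup.of k) := by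
  simp only [schottkyGen, map_mul, toFreeByDihedral_of, toFreeByDihedral_t, stableImage]
  ext <;> simp

include hφ hm in
def ofFreeByDihedral : FreeByDihedral n →* HNNExtension (DihedralGroup n) _ _ φ :=
  SemidirectProduct.lift (FreeGroup.lift (schottkyGen φ m)) of fun d =>
    FreeGroup.ext_hom _ _ fun k => by
      simp only [MonoidHom.comp_apply, MulEquiv.coe_toMonoidHom, FreeGroup.permHom_apply_of,
        FreeGroup.lift_apply_of, MulAut.conj_apply]
      exact (of_mul_schottkyGen_mul_inv φ hφ hm d k).symm

@[simp] theorem ofFreeByDihedral_inl_of (k : ZMod n) :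
    ofFreeByDihedral φ hφ hm (inl (FreeGroup.of k)) = schottkyGen φ m k := by
  rw [ofFreeByDihedral, SemidirectProduct.lift_inl, FreeGroup.lift_apply_of]

@[simp] theorem ofFreeByDihedral_inr (d : DihedralGroup n) :
    ofFreeByDihedral φ hφ hm (inr d) = of d :=
  SemidirectProduct.lift_inr _ _ _ _

theorem ofFreeByDihedral_stableImage : ofFreeByDihedral φ hφ hm (stableImage m) = t :=
  calc ofFreeByDihedral φ hφ hm (stableImage m)
      = of (r (-m)) * of (r m) * t * (of (r m) * of (r (-m))) := by
        simp only [stableImage, map_mul, ofFreeByDihedral_inl_of, ofFreeByDihedral_inr,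
          schottkyGen, mul_assoc]
    _ = t := by
        simp only [← map_mul, r_mul_r, neg_add_cancel, add_neg_cancel, ← one_def, map_one,
          one_mul, mul_one]

-- `r_mul_sr` is excluded because `simp` would also rewrite the `r 1 * sr 0` in the type of `t`.
def equivFreeByDihedral : HNNExtension (DihedralGroup n) _ _ φ ≃* FreeByDihedral n :=
  MonoidHom.toMulEquiv (toFreeByDihedral φ hφ hm) (ofFreeByDihedral φ hφ hm)
    (HNNExtension.hom_ext (MonoidHom.ext fun d => by simp [-r_mul_sr])
      (by simp [-r_mul_sr, ofFreeByDihedral_stableImage]))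
    (SemidirectProduct.hom_ext
      (FreeGroup.ext_hom _ _ fun k => by simp [-r_mul_sr, toFreeByDihedral_schottkyGen])
      (MonoidHom.ext fun d => by simp [-r_mul_sr]))

theorem map_closure_range_schottkyGen :
    (Subgroup.closure (Set.range (schottkyGen φ m))).map
      (equivFreeByDihedral φ hφ hm).toMonoidHom = inl.range := by
  have hgen : ⇑(equivFreeByDihedral φ hφ hm).toMonoidHom ∘ schottkyGen φ m =
      inl ∘ FreeGroup.of :=
    funext (toFreeByDihedral_schottkyGen φ hφ hm)
  rw [MonoidHom.map_closure, ← Set.range_comp, hgen, Set.range_comp, ← MonoidHom.map_closure,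
    FreeGroup.closure_range_of, ← MonoidHom.range_eq_map]

end DihedralHNN

theorem hnn_dihedral_odd_schottky_subgroup_general (n : ℕ) (hodd : Odd n)
    (φ : (Subgroup.closure {DihedralGroup.sr 0} : Subgroup (DihedralGroup n)) ≃*
      (Subgroup.closure {DihedralGroup.r 1 * DihedralGroup.sr 0} : Subgroup (DihedralGroup n)))
    (hφ : (φ ⟨DihedralGroup.sr 0, Subgroup.subset_closure (Set.mem_singleton _)⟩ :
        DihedralGroup n) = DihedralGroup.r 1 * DihedralGroup.sr 0)
    (Γ : Subgroup (HNNExtension (DihedralGroup n) _ _ φ))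
    (hΓ : Γ = Subgroup.closure
      { x | ∃ k : ℕ, k < n ∧
          x = (HNNExtension.of (DihedralGroup.r 1)) ^ k *
              ((HNNExtension.of (DihedralGroup.r 1)) ^ ((n - 1) / 2) * HNNExtension.t) *
              ((HNNExtension.of (DihedralGroup.r 1)) ^ k)⁻¹ }) :
    Γ.Normal ∧ Γ.index = 2 * n ∧ Nonempty (Γ ≃* FreeGroup (Fin n)) := by
  have : NeZero n := ⟨hodd.pos.ne'⟩
  have hmap := DihedralHNN.map_closure_range_schottkyGen φ hφ
    (ZMod.natCast_half_pred_add_self_add_one hodd)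
  rw [← DihedralHNN.setOf_conj_eq_range_schottkyGen, ← hΓ] at hmap
  obtain ⟨hnormal, hindex, ⟨iso⟩⟩ :=
    SemidirectProduct.normal_index_mulEquiv_of_map_eq_range_inl _ hmap
  exact ⟨hnormal, hindex.trans DihedralGroup.nat_card,
    ⟨iso.trans (FreeGroup.freeGroupCongr (Fintype.equivFinOfCardEq (ZMod.card n)))⟩⟩

/-- In the HNN extension `K` of `Dₙ = ⟨A,B⟩` (`A = r 1`, `B = sr 0`,
`n ≥ 3` odd) by the stable letter `T = t` with `T B T⁻¹ = AB`, the subgroup `Γ`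
generated by the `n` conjugates `Aᵏ C A⁻ᵏ` (`k = 0,…,n−1`), where
`C = A^((n−1)/2) T`, is a normal subgroup of index `2n`, and is free of rank `n`. -/
theorem hnn_dihedral_odd_schottky_subgroup (n : ℕ) (hn : 3 ≤ n) (hodd : Odd n)
    (φ : (Subgroup.closure {DihedralGroup.sr 0} : Subgroup (DihedralGroup n)) ≃*
      (Subgroup.closure {DihedralGroup.r 1 * DihedralGroup.sr 0} : Subgroup (DihedralGroup n)))
    (hφ : (φ ⟨DihedralGroup.sr 0, Subgroup.subset_closure (Set.mem_singleton _)⟩ :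
        DihedralGroup n) = DihedralGroup.r 1 * DihedralGroup.sr 0)
    (Γ : Subgroup (HNNExtension (DihedralGroup n) _ _ φ))
    (hΓ : Γ = Subgroup.closure
      { x | ∃ k : ℕ, k < n ∧
          x = (HNNExtension.of (DihedralGroup.r 1)) ^ k *
              ((HNNExtension.of (DihedralGroup.r 1)) ^ ((n - 1) / 2) * HNNExtension.t) *
              ((HNNExtension.of (DihedralGroup.r 1)) ^ k)⁻¹ }) :
    Γ.Normal ∧ Γ.index = 2 * n ∧ Nonempty (Γ ≃* FreeGroup (Fin n)) :=
  hnn_dihedral_odd_schottky_subgroup_general n hodd φ hφ Γ hΓ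
end

section
/- Let K be the HNN extension of A_4 = ⟨A, B : A³ = B² = (AB)³ = 1⟩ by a stable letter T with T A T⁻¹ = A. Then the subgroup Γ = ⟨T, B T B, A B T B A⁻¹, A⁻¹ B T B A⟩ is a normal subgroup of K of index 12, and Γ is a free group of rank 4. -/
open HNNExtension Subgroup

namespace HNNAux

variable {G : Type*} [Group G] (C : Subgroup G)

/-- Retraction of the HNN extension killing `t`. -/
noncomputable def phiC : HNNExtension G C C (MulEquiv.refl C) →* G :=
  HNNExtension.lift (MonoidHom.id G) 1 (by intro a; simp)

@[simp] lemma phiC_of (g : G) : phiC C (of g) = g := by simp [phiC]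

@[simp] lemma phiC_t : phiC C t = 1 := by simp [phiC]

lemma t_comm {a : G} (ha : a ∈ C) :
    t * (of a : HNNExtension G C C (MulEquiv.refl C)) = of a * t := by
  simpa using t_mul_of (φ := MulEquiv.refl C) ⟨a, ha⟩

/-- conjugates of `t` indexed by left cosets -/
noncomputable def cC : G ⧸ C → HNNExtension G C C (MulEquiv.refl C) :=
  fun x => Quotient.liftOn' x (fun g => of g * t * (of g)⁻¹) (by
    intro g h hr
    rw [QuotientGroup.leftRel_apply] at hr
    have hh : h = g * (g⁻¹ * h) := by group
    rw [hh, map_mul]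
    have ht := t_comm C hr
    simp only [mul_inv_rev]
    rw [show (of g * of (g⁻¹ * h) * t : HNNExtension G C C (MulEquiv.refl C)) =
      of g * (of (g⁻¹ * h) * t) from by group, ← ht]
    group)

lemma cC_mk (g : G) : cC C (g : G ⧸ C) = of g * t * (of g)⁻¹ := rfl


lemma phiC_cC (x : G ⧸ C) : phiC C (cC C x) = 1 := by
  induction x using QuotientGroup.induction_on with
  | H g => simp [cC_mk]

/-- The subgroup generated by the conjugates of `t`. -/
noncomputable def GammaC : Subgroup (HNNExtension G C C (MulEquiv.refl C)) :=
  Subgroup.closure (Set.range (cC C))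

lemma cC_mem (x : G ⧸ C) : cC C x ∈ GammaC C := subset_closure ⟨x, rfl⟩

lemma conj_cC (g h : G) :
    of g * cC C (h : G ⧸ C) * (of g)⁻¹ = cC C ((g * h : G) : G ⧸ C) := by
  simp only [cC_mk, map_mul, mul_inv_rev]
  group

lemma conj_mem (g : G) {k} (hk : k ∈ GammaC C) : of g * k * (of g)⁻¹ ∈ GammaC C := by
  induction hk using closure_induction with
  | mem x hx =>
    obtain ⟨y, rfl⟩ := hx
    induction y using QuotientGroup.induction_on with
    | H h => rw [conj_cC]; exact cC_mem C _
  | one => simpa using one_mem _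
  | mul x y hx hy ihx ihy =>
    have e : of g * (x * y) * (of g)⁻¹
        = (of g * x * (of g)⁻¹) * (of g * y * (of g)⁻¹) := by group
    rw [e]; exact mul_mem ihx ihy
  | inv x hx ih =>
    have e : of g * x⁻¹ * (of g)⁻¹ = (of g * x * (of g)⁻¹)⁻¹ := by group
    rw [e]; exact inv_mem ih

lemma ker_eq : (phiC C).ker = GammaC C := by
  apply le_antisymm
  · intro k hk
    have main : ∀ k : HNNExtension G C C (MulEquiv.refl C),
        k * (of (phiC C k))⁻¹ ∈ GammaC C := by
      intro k
      induction k using HNNExtension.induction_on with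
      | of g => simp only [phiC_of]; simpa using one_mem _
      | t =>
        have e : (t : HNNExtension G C C (MulEquiv.refl C)) * (of (phiC C t))⁻¹
            = cC C ((1 : G) : G ⧸ C) := by simp [cC_mk]
        rw [e]; exact cC_mem C _
      | mul x y ihx ihy =>
        have e : x * y * (of (phiC C (x * y)))⁻¹
            = (x * (of (phiC C x))⁻¹)
              * (of (phiC C x) * (y * (of (phiC C y))⁻¹) * (of (phiC C x))⁻¹) := by
          rw [map_mul, map_mul]; group
        rw [e]; exact mul_mem ihx (conj_mem C _ ihy)
      | inv x ih =>
        have e : x⁻¹ * (of (phiC C x⁻¹))⁻¹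
            = (of ((phiC C x)⁻¹) * (x * (of (phiC C x))⁻¹) * (of ((phiC C x)⁻¹))⁻¹)⁻¹ := by
          rw [map_inv, map_inv]; group
        rw [e]; exact inv_mem (conj_mem C _ ih)
    have h := main k
    rw [MonoidHom.mem_ker] at hk
    simpa [hk] using h
  · rw [GammaC, closure_le]
    rintro _ ⟨y, rfl⟩
    simp only [SetLike.mem_coe, MonoidHom.mem_ker]
    exact phiC_cC C y

instance : (GammaC C).Normal := ker_eq C ▸ (phiC C).normal_ker

/-- Permutations of the basis act on the free group. -/
def permAut (X : Type*) : Equiv.Perm X →* MulAut (FreeGroup X) where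
  toFun e := FreeGroup.freeGroupCongr e
  map_one' := by
    show FreeGroup.freeGroupCongr (Equiv.refl X) = 1
    rw [FreeGroup.freeGroupCongr_refl]; rfl
  map_mul' e f := by
    rw [Equiv.Perm.mul_def, MulAut.mul_def, FreeGroup.freeGroupCongr_trans]

/-- `G` acts on the free group on `G ⧸ C` -/
noncomputable def rhoC : G →* MulAut (FreeGroup (G ⧸ C)) :=
  (permAut (G ⧸ C)).comp (MulAction.toPermHom G (G ⧸ C))

lemma rhoC_of (g : G) (x : G ⧸ C) : rhoC C g (FreeGroup.of x) = FreeGroup.of (g • x) := by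
  simp [rhoC, permAut, FreeGroup.map.of]

/-- The structure map to the semidirect product. -/
noncomputable def PsiC :
    HNNExtension G C C (MulEquiv.refl C) →* FreeGroup (G ⧸ C) ⋊[rhoC C] G :=
  HNNExtension.lift SemidirectProduct.inr
    (SemidirectProduct.inl (FreeGroup.of ((1 : G) : G ⧸ C))) (by
      intro a
      have h1 : rhoC C (a : G) (FreeGroup.of ((1 : G) : G ⧸ C))
          = FreeGroup.of ((1 : G) : G ⧸ C) := by
        rw [rhoC_of]
        congr 1
        rw [MulAction.Quotient.smul_mk]
        rw [QuotientGroup.eq]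
        simpa using inv_mem a.2
      have h2 := SemidirectProduct.inl_aut (φ := rhoC C) (a : G)
        (FreeGroup.of ((1 : G) : G ⧸ C))
      rw [h1] at h2
      simp only [MulEquiv.refl_apply]
      conv_lhs => rw [h2]
      simp [mul_assoc, ← map_mul])

noncomputable def uC : FreeGroup (G ⧸ C) →* HNNExtension G C C (MulEquiv.refl C) :=
  FreeGroup.lift (cC C)

lemma uC_range : (uC C).range = GammaC C := FreeGroup.range_lift_eq_closure

lemma Psi_u (w : FreeGroup (G ⧸ C)) : PsiC C (uC C w) = SemidirectProduct.inl w := by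
  have h : (PsiC C).comp (uC C) = SemidirectProduct.inl := by
    apply FreeGroup.ext_hom
    intro x
    induction x using QuotientGroup.induction_on with
    | H g =>
      have h2 := SemidirectProduct.inl_aut (φ := rhoC C) g
        (FreeGroup.of ((1 : G) : G ⧸ C))
      have h3 : rhoC C g (FreeGroup.of ((1 : G) : G ⧸ C))
          = FreeGroup.of ((g : G ⧸ C)) := by
        rw [rhoC_of]
        congr 1
        rw [MulAction.Quotient.smul_mk]
        simp
      rw [h3] at h2
      simp only [MonoidHom.comp_apply, uC, FreeGroup.lift_apply_of, cC_mk, PsiC, map_mul, map_inv,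
        HNNExtension.lift_of, HNNExtension.lift_t]
      rw [h2]
      simp [map_inv]
  calc PsiC C (uC C w) = ((PsiC C).comp (uC C)) w := rfl
  _ = SemidirectProduct.inl w := by rw [h]

lemma uC_injective : Function.Injective (uC C) := by
  intro a b hab
  have h := congrArg (PsiC C) hab
  rw [Psi_u, Psi_u] at h
  exact SemidirectProduct.inl_injective h




/-- The coset decomposition predicate: `g` lies in one of the four cosets
`C`, `BC`, `ABC`, `A⁻¹BC`. -/
def Pd {G : Type*} [Group G] (C : Subgroup G) (A B g : G) : Prop :=
  ∃ a ∈ C, g = a ∨ g = B * a ∨ g = A * (B * a) ∨ g = A⁻¹ * (B * a)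

lemma all_Pd {G : Type*} [Group G] {A B : G} (hgen : Subgroup.closure {A, B} = ⊤)
    (hA3 : A * (A * A) = 1) (hB2 : B * B = 1)
    (hBAB0 : B * (A * B) = A⁻¹ * (B * A⁻¹)) :
    ∀ g, Pd (Subgroup.closure {A}) A B g := by
  have hAC : A ∈ Subgroup.closure {A} := subset_closure rfl
  have hBinv : B⁻¹ = B := inv_eq_of_mul_eq_one_right hB2
  have hAinv : A⁻¹ = A * A := inv_eq_of_mul_eq_one_right (by rw [← mul_assoc] at hA3 ⊢; exact hA3)
  have hA2 : A⁻¹ * A⁻¹ = A := by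
    rw [hAinv]
    have e : A * A * (A * A) = A * (A * (A * A)) := by group
    rw [e, hA3, mul_one]
  have hA'A'x : ∀ x, A⁻¹ * (A⁻¹ * x) = A * x := fun x => by rw [← mul_assoc, hA2]
  have hAAx : ∀ x, A * (A * x) = A⁻¹ * x := fun x => by rw [← mul_assoc, ← hAinv]
  have hBBx : ∀ x, B * (B * x) = x := fun x => by rw [← mul_assoc, hB2, one_mul]
  have hAA'x : ∀ x, A * (A⁻¹ * x) = x := fun x => by rw [← mul_assoc, mul_inv_cancel, one_mul]
  have hA'Ax : ∀ x, A⁻¹ * (A * x) = x := fun x => by rw [← mul_assoc, inv_mul_cancel, one_mul]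
  have hBABx : ∀ x, B * (A * (B * x)) = A⁻¹ * (B * (A⁻¹ * x)) := fun x => by
    have h := congrArg (· * x) hBAB0
    simpa [mul_assoc] using h
  have hBA'B0 : B * (A⁻¹ * B) = A * (B * A) := by
    have h := congrArg (fun y : G => y⁻¹) hBAB0
    simp only [mul_inv_rev, inv_inv] at h
    rw [hBinv] at h
    simp only [mul_assoc] at h
    exact h
  have hBA'Bx : ∀ x, B * (A⁻¹ * (B * x)) = A * (B * (A * x)) := fun x => by
    have h := congrArg (· * x) hBA'B0
    simpa [mul_assoc] using h
  set C := Subgroup.closure {A} with hC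
  have hAmul : ∀ h, Pd C A B h → Pd C A B (A * h) := by
    rintro h ⟨a, ha, h1 | h1 | h1 | h1⟩ <;> rw [h1]
    · exact ⟨A * a, mul_mem hAC ha, Or.inl rfl⟩
    · exact ⟨a, ha, Or.inr (Or.inr (Or.inl rfl))⟩
    · exact ⟨a, ha, Or.inr (Or.inr (Or.inr (hAAx (B * a))))⟩
    · exact ⟨a, ha, Or.inr (Or.inl (hAA'x (B * a)))⟩
  have hA'mul : ∀ h, Pd C A B h → Pd C A B (A⁻¹ * h) := by
    rintro h ⟨a, ha, h1 | h1 | h1 | h1⟩ <;> rw [h1]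
    · exact ⟨A⁻¹ * a, mul_mem (inv_mem hAC) ha, Or.inl rfl⟩
    · exact ⟨a, ha, Or.inr (Or.inr (Or.inr rfl))⟩
    · exact ⟨a, ha, Or.inr (Or.inl (hA'Ax (B * a)))⟩
    · exact ⟨a, ha, Or.inr (Or.inr (Or.inl (hA'A'x (B * a))))⟩
  have hBmul : ∀ h, Pd C A B h → Pd C A B (B * h) := by
    rintro h ⟨a, ha, h1 | h1 | h1 | h1⟩ <;> rw [h1]
    · exact ⟨a, ha, Or.inr (Or.inl rfl)⟩
    · exact ⟨a, ha, Or.inl (hBBx a)⟩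
    · exact ⟨A⁻¹ * a, mul_mem (inv_mem hAC) ha, Or.inr (Or.inr (Or.inr (hBABx a)))⟩
    · exact ⟨A * a, mul_mem hAC ha, Or.inr (Or.inr (Or.inl (hBA'Bx a)))⟩
  have key : ∀ g ∈ Subgroup.closure ({A, B} : Set G),
      (∀ h, Pd C A B h → Pd C A B (g * h)) ∧ (∀ h, Pd C A B h → Pd C A B (g⁻¹ * h)) := by
    intro g hg
    induction hg using closure_induction with
    | mem x hx =>
      rw [Set.mem_insert_iff, Set.mem_singleton_iff] at hx
      rcases hx with h | h
      · subst h; exact ⟨hAmul, hA'mul⟩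
      · subst h; exact ⟨hBmul, fun h hh => by rw [hBinv]; exact hBmul h hh⟩
    | one => exact ⟨fun h hh => by rwa [one_mul], fun h hh => by rwa [inv_one, one_mul]⟩
    | mul x y hx hy ihx ihy =>
      exact ⟨fun h hh => by rw [mul_assoc]; exact ihx.1 _ (ihy.1 _ hh),
             fun h hh => by rw [mul_inv_rev, mul_assoc]; exact ihy.2 _ (ihx.2 _ hh)⟩
    | inv x hx ih =>
      exact ⟨fun h hh => ih.2 h hh, fun h hh => by rw [inv_inv]; exact ih.1 h hh⟩
  intro g
  have hg : g ∈ Subgroup.closure ({A, B} : Set G) := hgen ▸ mem_top g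
  have h1 : Pd C A B 1 := ⟨1, one_mem _, Or.inl rfl⟩
  have h2 := (key g hg).1 1 h1
  rwa [mul_one] at h2

lemma main_aux {G : Type*} [Group G] [Finite G] (A B : G) (C : Subgroup G)
    (hBinv : B⁻¹ = B)
    (hPd : ∀ g, Pd C A B g)
    (hG12 : Nat.card G = 12) (hC3 : Nat.card C = 3)
    (Γ : Subgroup (HNNExtension G C C (MulEquiv.refl C)))
    (hΓ : Γ = Subgroup.closure
      {t, of B * t * of B, of A * of B * t * of B * (of A)⁻¹,
       (of A)⁻¹ * of B * t * of B * of A}) :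
    Γ.Normal ∧ Γ.index = 12 ∧ Nonempty (Γ ≃* FreeGroup (Fin 4)) := by
  classical
  have hc1 : (t : HNNExtension G C C (MulEquiv.refl C)) = cC C (((1 : G) : G ⧸ C)) := by
    rw [cC_mk]; simp
  have hcB : (of B * t * of B : HNNExtension G C C (MulEquiv.refl C))
      = cC C ((B : G) : G ⧸ C) := by
    rw [cC_mk, ← map_inv, hBinv]
  have hcAB : (of A * of B * t * of B * (of A)⁻¹ : HNNExtension G C C (MulEquiv.refl C))
      = cC C ((A * B : G) : G ⧸ C) := by
    rw [cC_mk]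
    simp only [map_mul, ← map_inv, mul_inv_rev, hBinv, mul_assoc]
  have hcA'B : ((of A)⁻¹ * of B * t * of B * of A : HNNExtension G C C (MulEquiv.refl C))
      = cC C ((A⁻¹ * B : G) : G ⧸ C) := by
    rw [cC_mk]
    simp only [map_mul, ← map_inv, mul_inv_rev, hBinv, inv_inv, mul_assoc]
  have hΓeq : Γ = GammaC C := by
    rw [hΓ, GammaC]
    apply le_antisymm
    · rw [Subgroup.closure_le]
      intro x hx
      simp only [Set.mem_insert_iff, Set.mem_singleton_iff] at hx
      rcases hx with rfl | rfl | rfl | rfl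
      · exact subset_closure ⟨_, hc1.symm⟩
      · exact subset_closure ⟨_, hcB.symm⟩
      · exact subset_closure ⟨_, hcAB.symm⟩
      · exact subset_closure ⟨_, hcA'B.symm⟩
    · rw [Subgroup.closure_le]
      rintro _ ⟨y, rfl⟩
      induction y using QuotientGroup.induction_on with
      | H g =>
        obtain ⟨a, ha, h1 | h1 | h1 | h1⟩ := hPd g <;> rw [h1]
        · have he : ((a : G) : G ⧸ C) = ((1 : G) : G ⧸ C) := by
            rw [QuotientGroup.eq]; simpa using inv_mem ha
          rw [he, ← hc1]
          exact subset_closure (Set.mem_insert _ _)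
        · have he : ((B * a : G) : G ⧸ C) = ((B : G) : G ⧸ C) := by
            rw [QuotientGroup.eq]
            simpa [mul_inv_rev, mul_assoc] using inv_mem ha
          rw [he, ← hcB]
          exact subset_closure (Set.mem_insert_of_mem _ (Set.mem_insert _ _))
        · have he : ((A * (B * a) : G) : G ⧸ C) = ((A * B : G) : G ⧸ C) := by
            rw [QuotientGroup.eq]
            simpa [mul_inv_rev, mul_assoc] using inv_mem ha
          rw [he, ← hcAB]
          exact subset_closure (Set.mem_insert_of_mem _ (Set.mem_insert_of_mem _
            (Set.mem_insert _ _)))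
        · have he : ((A⁻¹ * (B * a) : G) : G ⧸ C) = ((A⁻¹ * B : G) : G ⧸ C) := by
            rw [QuotientGroup.eq]
            simpa [mul_inv_rev, mul_assoc] using inv_mem ha
          rw [he, ← hcA'B]
          exact subset_closure (Set.mem_insert_of_mem _ (Set.mem_insert_of_mem _
            (Set.mem_insert_of_mem _ rfl)))
  refine ⟨?_, ?_, ?_⟩
  · rw [hΓeq, ← ker_eq]
    exact MonoidHom.normal_ker _
  · rw [hΓeq, ← ker_eq, Subgroup.index_ker]
    have hsurj : (phiC C).range = ⊤ := by
      rw [Subgroup.eq_top_iff']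
      intro g
      exact ⟨HNNExtension.of g, by simp⟩
    rw [hsurj, Subgroup.card_top, hG12]
  · have hcard : Nat.card (G ⧸ C) = 4 := by
      have h4 := Subgroup.card_mul_index C
      have h5 : C.index = Nat.card (G ⧸ C) := rfl
      rw [hC3, hG12, h5] at h4
      omega
    haveI := Fintype.ofFinite (G ⧸ C)
    have e : (G ⧸ C) ≃ Fin 4 :=
      Fintype.equivFinOfCardEq (by rw [← Nat.card_eq_fintype_card, hcard])
    have e1 := MonoidHom.ofInjective (uC_injective C)
    exact ⟨((MulEquiv.subgroupCongr (by rw [hΓeq, ← uC_range])).trans e1.symm).trans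
      (FreeGroup.freeGroupCongr e)⟩

end HNNAux

open HNNAux in
/-- Let `K` be the HNN extension of
`A₄ = ⟨A, B : A³ = B² = (AB)³ = 1⟩` by a stable letter `T = t` with `T A T⁻¹ = A`
(identity on the order-3 subgroup `⟨A⟩`). Then the subgroup
`Γ = ⟨T, BTB, ABTBA⁻¹, A⁻¹BTBA⟩` is a normal subgroup of index `12`, and is free
of rank `4`. -/
theorem hnn_A4_schottky_subgroup
    (A B : alternatingGroup (Fin 4)) (hA : orderOf A = 3) (hB : orderOf B = 2)
    (hAB : orderOf (A * B) = 3) (hgen : Subgroup.closure {A, B} = ⊤)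
    (Γ : Subgroup (HNNExtension (alternatingGroup (Fin 4))
      (Subgroup.closure {A}) (Subgroup.closure {A})
      (MulEquiv.refl (Subgroup.closure {A}))))
    (hΓ : Γ = Subgroup.closure
      {HNNExtension.t,
       HNNExtension.of B * HNNExtension.t * HNNExtension.of B,
       HNNExtension.of A * HNNExtension.of B * HNNExtension.t * HNNExtension.of B *
         (HNNExtension.of A)⁻¹,
       (HNNExtension.of A)⁻¹ * HNNExtension.of B * HNNExtension.t * HNNExtension.of B *
         HNNExtension.of A}) :
    Γ.Normal ∧ Γ.index = 12 ∧ Nonempty (Γ ≃* FreeGroup (Fin 4)) := by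
  have hA3 : A * (A * A) = 1 := by
    have h := pow_orderOf_eq_one A; rw [hA] at h
    simpa [pow_succ, mul_assoc] using h
  have hB2 : B * B = 1 := by
    have h := pow_orderOf_eq_one B; rw [hB] at h
    simpa [pow_succ] using h
  have hBinv : B⁻¹ = B := inv_eq_of_mul_eq_one_right hB2
  have hAB6 : A * (B * (A * (B * (A * B)))) = 1 := by
    have h := pow_orderOf_eq_one (A * B); rw [hAB] at h
    simpa [pow_succ, mul_assoc] using h
  have hBAB0 : B * (A * B) = A⁻¹ * (B * A⁻¹) := by
    have h := congrArg (fun y => A⁻¹ * y * (B⁻¹ * A⁻¹)) hAB6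
    simp only [mul_assoc, mul_inv_cancel_left, inv_mul_cancel_left, mul_inv_cancel,
      inv_mul_cancel, mul_one, one_mul] at h
    rw [hBinv] at h
    exact h
  have hG12 : Nat.card (alternatingGroup (Fin 4)) = 12 := by
    rw [Nat.card_eq_fintype_card]
    have h2 := two_mul_card_alternatingGroup (α := Fin 4)
    rw [Fintype.card_perm, Fintype.card_fin] at h2
    have h3 : Nat.factorial 4 = 24 := by decide
    rw [h3] at h2
    omega
  have hC3 : Nat.card (Subgroup.closure {A} : Subgroup (alternatingGroup (Fin 4))) = 3 := by
    rw [← Subgroup.zpowers_eq_closure, Nat.card_zpowers, hA]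
  exact HNNAux.main_aux A B (Subgroup.closure {A}) hBinv
    (all_Pd hgen hA3 hB2 hBAB0) hG12 hC3 Γ hΓ
end
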